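/- arXiv:1302.6055 — 8 statements merged into one kernel-verified Lean document; each statement's English description precedes it below -/
import Mathlib

section
/- There is no pair (f,g) of strictly positive continuous functions on [0,1] with f ≠ g satisfying (A₁f)(t) = g(t) and (A₁g)(t) = f(t) for all t ∈ [0,1], i.e. satisfying (Wf)(t)/(Wf)(0) = g(t) and (Wg)(t)/(Wg)(0) = f(t) for all t ∈ [0,1]. -/
/-!
Write `a = (W f)(0)`, `b = (W g)(0)`, so that `W f = a g` and `W g = b f`, and let `M` be the
maximum of `f / g`, attained at `s`. Then `φ = M g - f ≥ 0` vanishes at `s`, so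
`ψ = W φ = M b f - a g ≥ 0`, while `(W ψ)(s) = a b φ(s) = 0`. A positive kernel kills no nonzero
nonnegative continuous function, hence `ψ = 0`; at `0`, where `f = g = 1`, this reads `M b = a`,
and then `f = g`.
-/

open Set MeasureTheory

/-- The linear integral operator `(W f)(t) = ∫₀¹ K(t,u) f(u) du`. -/
noncomputable def W (K : ℝ → ℝ → ℝ) (f : ℝ → ℝ) (t : ℝ) : ℝ :=
  ∫ u in (0:ℝ)..1, K t u * f u

section PositiveKernel

variable {K : ℝ → ℝ → ℝ}

theorem W_const_mul (c : ℝ) (φ : ℝ → ℝ) (t : ℝ) :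
    W K (fun u => c * φ u) t = c * W K φ t := by
  simp only [W, ← intervalIntegral.integral_const_mul]
  congr 1
  ext u
  ring

theorem W_nonneg (hKpos : ∀ t ∈ Icc (0:ℝ) 1, ∀ u ∈ Icc (0:ℝ) 1, 0 < K t u)
    {φ : ℝ → ℝ} (hφ : ∀ u ∈ Icc (0:ℝ) 1, 0 ≤ φ u) {t : ℝ} (ht : t ∈ Icc (0:ℝ) 1) :
    0 ≤ W K φ t :=
  intervalIntegral.integral_nonneg zero_le_one fun u hu =>
    mul_nonneg (hKpos t ht u hu).le (hφ u hu)

variable (hKcont : ContinuousOn (fun p : ℝ × ℝ => K p.1 p.2) (Icc 0 1 ×ˢ Icc 0 1))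
include hKcont

theorem continuousOn_kernel_mul {φ : ℝ → ℝ} (hφ : ContinuousOn φ (Icc 0 1)) {t : ℝ}
    (ht : t ∈ Icc (0:ℝ) 1) : ContinuousOn (fun u => K t u * φ u) (Icc 0 1) :=
  (hKcont.comp (continuous_const.prodMk continuous_id).continuousOn
    fun _ hu => ⟨ht, hu⟩).mul hφ

theorem W_sub {φ ψ : ℝ → ℝ} (hφ : ContinuousOn φ (Icc 0 1)) (hψ : ContinuousOn ψ (Icc 0 1))
    {t : ℝ} (ht : t ∈ Icc (0:ℝ) 1) :
    W K (fun u => φ u - ψ u) t = W K φ t - W K ψ t := by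
  simp only [W, mul_sub]
  exact intervalIntegral.integral_sub
    ((continuousOn_kernel_mul hKcont hφ ht).intervalIntegrable_of_Icc zero_le_one)
    ((continuousOn_kernel_mul hKcont hψ ht).intervalIntegrable_of_Icc zero_le_one)

theorem W_pos (hKpos : ∀ t ∈ Icc (0:ℝ) 1, ∀ u ∈ Icc (0:ℝ) 1, 0 < K t u)
    {φ : ℝ → ℝ} (hφ : ContinuousOn φ (Icc 0 1)) (hφ0 : ∀ u ∈ Icc (0:ℝ) 1, 0 ≤ φ u)
    {u : ℝ} (hu : u ∈ Icc (0:ℝ) 1) (hφu : 0 < φ u) {t : ℝ} (ht : t ∈ Icc (0:ℝ) 1) :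
    0 < W K φ t := by
  have h := intervalIntegral.integral_lt_integral_of_continuousOn_of_le_of_exists_lt
    zero_lt_one continuousOn_const (continuousOn_kernel_mul hKcont hφ ht)
    (fun v hv => mul_nonneg (hKpos t ht v (Ioc_subset_Icc_self hv)).le
      (hφ0 v (Ioc_subset_Icc_self hv)))
    ⟨u, hu, mul_pos (hKpos t ht u hu) hφu⟩
  simpa [W] using h

theorem exists_mul_eq_mul_of_W_swap (hKpos : ∀ t ∈ Icc (0:ℝ) 1, ∀ u ∈ Icc (0:ℝ) 1, 0 < K t u)
    {f g : ℝ → ℝ} (hf : ContinuousOn f (Icc 0 1)) (hg : ContinuousOn g (Icc 0 1))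
    (hgpos : ∀ u ∈ Icc (0:ℝ) 1, 0 < g u) {a b : ℝ}
    (hWf : ∀ t ∈ Icc (0:ℝ) 1, W K f t = a * g t) (hWg : ∀ t ∈ Icc (0:ℝ) 1, W K g t = b * f t) :
    ∃ c, ∀ u ∈ Icc (0:ℝ) 1, a * g u = c * f u := by
  obtain ⟨s, hs, hmax⟩ := isCompact_Icc.exists_isMaxOn (nonempty_Icc.mpr zero_le_one)
    (hf.div hg fun u hu => (hgpos u hu).ne')
  set M := f s / g s
  have hφ : ∀ u ∈ Icc (0:ℝ) 1, 0 ≤ M * g u - f u := fun u hu => by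
    have : f u / g u ≤ M := hmax hu
    linarith [(div_le_iff₀ (hgpos u hu)).mp this]
  have hφs : M * g s - f s = 0 := by rw [div_mul_cancel₀ _ (hgpos s hs).ne', sub_self]
  have hMg : ContinuousOn (fun u => M * g u) (Icc 0 1) := continuousOn_const.mul hg
  have hMbf : ContinuousOn (fun u => M * b * f u) (Icc 0 1) := continuousOn_const.mul hf
  have hag : ContinuousOn (fun u => a * g u) (Icc 0 1) := continuousOn_const.mul hg
  have hψ : ∀ u ∈ Icc (0:ℝ) 1, 0 ≤ M * b * f u - a * g u := fun u hu => by
    have := W_nonneg hKpos hφ hu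
    rwa [W_sub hKcont hMg hf hu, W_const_mul, hWg u hu, hWf u hu, ← mul_assoc] at this
  have hWψs : W K (fun u => M * b * f u - a * g u) s = 0 := by
    rw [W_sub hKcont hMbf hag hs, W_const_mul, W_const_mul, hWf s hs, hWg s hs,
      ← sub_eq_zero.mp hφs]
    ring
  refine ⟨M * b, fun u hu => ?_⟩
  have hψu : M * b * f u - a * g u = 0 := (hψ u hu).eq_of_not_lt' fun hpos =>
    (W_pos hKcont hKpos (hMbf.sub hag) hψ hu hpos hs).ne' hWψs
  linarith

end PositiveKernel

theorem stmt_1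
    (K : ℝ → ℝ → ℝ)
    (hKcont : ContinuousOn (fun p : ℝ × ℝ => K p.1 p.2) (Icc 0 1 ×ˢ Icc 0 1))
    (hKpos : ∀ t ∈ Icc (0:ℝ) 1, ∀ u ∈ Icc (0:ℝ) 1, 0 < K t u) :
    ¬ ∃ f g : ℝ → ℝ,
      ContinuousOn f (Icc 0 1) ∧ ContinuousOn g (Icc 0 1) ∧
      (∀ t ∈ Icc (0:ℝ) 1, 0 < f t) ∧ (∀ t ∈ Icc (0:ℝ) 1, 0 < g t) ∧
      (∃ t ∈ Icc (0:ℝ) 1, f t ≠ g t) ∧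
      (∀ t ∈ Icc (0:ℝ) 1, W K f t / W K f 0 = g t) ∧
      (∀ t ∈ Icc (0:ℝ) 1, W K g t / W K g 0 = f t) := by
  rintro ⟨f, g, hf, hg, hfpos, hgpos, ⟨t₀, ht₀, hne⟩, hWf, hWg⟩
  have h0 : (0:ℝ) ∈ Icc 0 1 := left_mem_Icc.mpr zero_le_one
  set a := W K f 0
  set b := W K g 0
  have ha : 0 < a := W_pos hKcont hKpos hf (fun u hu => (hfpos u hu).le) h0 (hfpos 0 h0) h0
  have hb : 0 < b := W_pos hKcont hKpos hg (fun u hu => (hgpos u hu).le) h0 (hgpos 0 h0) h0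
  replace hWf : ∀ t ∈ Icc (0:ℝ) 1, W K f t = a * g t := fun t ht => by
    rw [← hWf t ht, mul_div_cancel₀ _ ha.ne']
  replace hWg : ∀ t ∈ Icc (0:ℝ) 1, W K g t = b * f t := fun t ht => by
    rw [← hWg t ht, mul_div_cancel₀ _ hb.ne']
  obtain ⟨c, hc⟩ := exists_mul_eq_mul_of_W_swap hKcont hKpos hf hg hgpos hWf hWg
  have hf0 : f 0 = 1 := (mul_eq_left₀ hb.ne').mp (hWg 0 h0).symm
  have hg0 : g 0 = 1 := (mul_eq_left₀ ha.ne').mp (hWf 0 h0).symm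
  have hca : c = a := by simpa [hf0, hg0] using (hc 0 h0).symm
  rw [hca] at hc
  exact hne (mul_left_cancel₀ ha.ne' (hc t₀ ht₀)).symm
end

section
/- Let k ≥ 2 be an integer. The system of equations (A_k f)(t) = g(t), (A_k g)(t) = f(t) for all t ∈ [0,1] has a solution (f,g) with f,g ∈ C₀⁺[0,1] if and only if there exist λ₁ > 0, λ₂ > 0 and functions f₁, g₁ ∈ C⁺[0,1] with f₁(0) = g₁(0) = 1 such that (H_k f₁)(t) = λ₁·g₁(t) and (H_k g₁)(t) = λ₂·f₁(t) for all t ∈ [0,1]. -/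
open Set MeasureTheory

/-- The Hammerstein operator `(H_k f)(t) = ∫₀¹ K(t,u) f(u)^k du`. -/
noncomputable def Hk (K : ℝ → ℝ → ℝ) (k : ℕ) (f : ℝ → ℝ) (t : ℝ) : ℝ :=
  ∫ u in (0:ℝ)..1, K t u * f u ^ k

lemma Kt_cont {K : ℝ → ℝ → ℝ}
    (hKcont : ContinuousOn (fun p : ℝ × ℝ => K p.1 p.2) (Icc 0 1 ×ˢ Icc 0 1))
    {t : ℝ} (ht : t ∈ Icc (0:ℝ) 1) : ContinuousOn (fun u => K t u) (Icc 0 1) := by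
  have : ContinuousOn (fun u : ℝ => ((t, u) : ℝ × ℝ)) (Icc 0 1) :=
    (continuous_const.prodMk continuous_id).continuousOn
  exact hKcont.comp this (fun u hu => ⟨ht, hu⟩)

lemma W_pos_s2 {K : ℝ → ℝ → ℝ}
    (hKcont : ContinuousOn (fun p : ℝ × ℝ => K p.1 p.2) (Icc 0 1 ×ˢ Icc 0 1))
    (hKpos : ∀ t ∈ Icc (0:ℝ) 1, ∀ u ∈ Icc (0:ℝ) 1, 0 < K t u)
    {f : ℝ → ℝ} (hf : ContinuousOn f (Icc 0 1))
    (hf0 : ∀ t ∈ Icc (0:ℝ) 1, 0 ≤ f t)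
    (hne : ∃ t ∈ Icc (0:ℝ) 1, f t ≠ 0)
    {t : ℝ} (ht : t ∈ Icc (0:ℝ) 1) : 0 < W K f t := by
  obtain ⟨t₀, ht₀, hft₀⟩ := hne
  apply intervalIntegral.integral_pos one_pos
  · exact (Kt_cont hKcont ht).mul hf
  · intro x hx
    have hx' : x ∈ Icc (0:ℝ) 1 := ⟨le_of_lt hx.1, hx.2⟩
    exact mul_nonneg (hKpos t ht x hx').le (hf0 x hx')
  · exact ⟨t₀, ht₀, mul_pos (hKpos t ht t₀ ht₀) ((hf0 t₀ ht₀).lt_of_ne (Ne.symm hft₀))⟩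

theorem stmt_2
    (K : ℝ → ℝ → ℝ) (k : ℕ) (hk : 2 ≤ k)
    (hKcont : ContinuousOn (fun p : ℝ × ℝ => K p.1 p.2) (Icc 0 1 ×ˢ Icc 0 1))
    (hKpos : ∀ t ∈ Icc (0:ℝ) 1, ∀ u ∈ Icc (0:ℝ) 1, 0 < K t u) :
    (∃ f g : ℝ → ℝ,
      ContinuousOn f (Icc 0 1) ∧ ContinuousOn g (Icc 0 1) ∧
      (∀ t ∈ Icc (0:ℝ) 1, 0 ≤ f t) ∧ (∀ t ∈ Icc (0:ℝ) 1, 0 ≤ g t) ∧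
      (∃ t ∈ Icc (0:ℝ) 1, f t ≠ 0) ∧ (∃ t ∈ Icc (0:ℝ) 1, g t ≠ 0) ∧
      (∀ t ∈ Icc (0:ℝ) 1, (W K f t / W K f 0) ^ k = g t) ∧
      (∀ t ∈ Icc (0:ℝ) 1, (W K g t / W K g 0) ^ k = f t))
    ↔
    (∃ lam₁ lam₂ : ℝ, 0 < lam₁ ∧ 0 < lam₂ ∧
      ∃ f₁ g₁ : ℝ → ℝ,
        ContinuousOn f₁ (Icc 0 1) ∧ ContinuousOn g₁ (Icc 0 1) ∧
        (∀ t ∈ Icc (0:ℝ) 1, 0 ≤ f₁ t) ∧ (∀ t ∈ Icc (0:ℝ) 1, 0 ≤ g₁ t) ∧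
        f₁ 0 = 1 ∧ g₁ 0 = 1 ∧
        (∀ t ∈ Icc (0:ℝ) 1, Hk K k f₁ t = lam₁ * g₁ t) ∧
        (∀ t ∈ Icc (0:ℝ) 1, Hk K k g₁ t = lam₂ * f₁ t)) := by
  have hk0 : k ≠ 0 := by omega
  have h0 : (0:ℝ) ∈ Icc (0:ℝ) 1 := by norm_num
  constructor
  · rintro ⟨f, g, hfc, hgc, hf0, hg0, hfne, hgne, hAf, hAg⟩
    have hFpos : ∀ t ∈ Icc (0:ℝ) 1, 0 < W K f t := fun t ht =>
      W_pos_s2 hKcont hKpos hfc hf0 hfne ht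
    have hGpos : ∀ t ∈ Icc (0:ℝ) 1, 0 < W K g t := fun t ht =>
      W_pos_s2 hKcont hKpos hgc hg0 hgne ht
    refine ⟨W K g 0, W K f 0, hGpos 0 h0, hFpos 0 h0,
      (fun t => (g t) ^ ((k:ℝ)⁻¹)), (fun t => (f t) ^ ((k:ℝ)⁻¹)), ?_, ?_, ?_, ?_, ?_, ?_, ?_, ?_⟩
    · exact hgc.rpow_const (fun x _ => Or.inr (by positivity))
    · exact hfc.rpow_const (fun x _ => Or.inr (by positivity))
    · exact fun t ht => Real.rpow_nonneg (hg0 t ht) _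
    · exact fun t ht => Real.rpow_nonneg (hf0 t ht) _
    · show (g 0) ^ ((k:ℝ)⁻¹) = 1
      rw [← hAf 0 h0, div_self (hFpos 0 h0).ne', one_pow, Real.one_rpow]
    · show (f 0) ^ ((k:ℝ)⁻¹) = 1
      rw [← hAg 0 h0, div_self (hGpos 0 h0).ne', one_pow, Real.one_rpow]
    · intro t ht
      have h1 : Hk K k (fun t => (g t) ^ ((k:ℝ)⁻¹)) t = W K g t := by
        unfold Hk W
        apply intervalIntegral.integral_congr
        intro u hu
        rw [uIcc_of_le (by norm_num : (0:ℝ) ≤ 1)] at hu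
        simp only
        rw [Real.rpow_inv_natCast_pow (hg0 u hu) hk0]
      rw [h1]
      show W K g t = W K g 0 * ((f t) ^ ((k:ℝ)⁻¹))
      have h2 : (f t) ^ ((k:ℝ)⁻¹) = W K g t / W K g 0 := by
        rw [← hAg t ht,
          Real.pow_rpow_inv_natCast (div_nonneg (hGpos t ht).le (hGpos 0 h0).le) hk0]
      rw [h2, mul_div_cancel₀ _ (hGpos 0 h0).ne']
    · intro t ht
      have h1 : Hk K k (fun t => (f t) ^ ((k:ℝ)⁻¹)) t = W K f t := by
        unfold Hk W
        apply intervalIntegral.integral_congr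
        intro u hu
        rw [uIcc_of_le (by norm_num : (0:ℝ) ≤ 1)] at hu
        simp only
        rw [Real.rpow_inv_natCast_pow (hf0 u hu) hk0]
      rw [h1]
      show W K f t = W K f 0 * ((g t) ^ ((k:ℝ)⁻¹))
      have h2 : (g t) ^ ((k:ℝ)⁻¹) = W K f t / W K f 0 := by
        rw [← hAf t ht,
          Real.pow_rpow_inv_natCast (div_nonneg (hFpos t ht).le (hFpos 0 h0).le) hk0]
      rw [h2, mul_div_cancel₀ _ (hFpos 0 h0).ne']
  · rintro ⟨lam₁, lam₂, hl₁, hl₂, f₁, g₁, hf₁c, hg₁c, hf₁0, hg₁0, hf₁1, hg₁1, hH₁, hH₂⟩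
    refine ⟨fun t => f₁ t ^ k, fun t => g₁ t ^ k, hf₁c.pow k, hg₁c.pow k,
      fun t ht => pow_nonneg (hf₁0 t ht) k, fun t ht => pow_nonneg (hg₁0 t ht) k,
      ⟨0, h0, by simp [hf₁1]⟩, ⟨0, h0, by simp [hg₁1]⟩, ?_, ?_⟩
    · intro t ht
      have hW : ∀ s ∈ Icc (0:ℝ) 1, W K (fun t => f₁ t ^ k) s = lam₁ * g₁ s := fun s hs => hH₁ s hs
      rw [hW t ht, hW 0 h0, hg₁1, mul_one, mul_div_cancel_left₀ _ hl₁.ne']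
    · intro t ht
      have hW : ∀ s ∈ Icc (0:ℝ) 1, W K (fun t => g₁ t ^ k) s = lam₂ * f₁ s := fun s hs => hH₂ s hs
      rw [hW t ht, hW 0 h0, hf₁1, mul_one, mul_div_cancel_left₀ _ hl₂.ne']
end

section
/- Let k ≥ 2 be an integer. If (f,g) with f,g ∈ C₀⁺[0,1] satisfies (H_k f)(t) = g(t) and (H_k g)(t) = f(t) for all t ∈ [0,1], then both f and g belong to the set 𝒫_k = {φ ∈ C[0,1] : (m/M)·(1/M)^{1/(k−1)} ≤ φ(t) ≤ (M/m)·(1/m)^{1/(k−1)} for all t ∈ [0,1]}. -/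
open Set MeasureTheory

/-!
Write `A = ∫₀¹ f^k` and `B = ∫₀¹ g^k`. Since `m ≤ K ≤ M`, the equations give `m B ≤ f ≤ M B` and
`m A ≤ g ≤ M A`, hence `(m B)^k ≤ A ≤ (M B)^k` and `(m A)^k ≤ B ≤ (M A)^k`. The smaller of `A, B`
then satisfies `z ≤ (M z)^k` and the larger `(m z)^k ≤ z`, which pins both `A` and `B` between
`(1/M)^{k/(k-1)}` and `(1/m)^{k/(k-1)}`; multiplying by `m` resp. `M` gives the bounds on `f, g`.
-/

namespace Real

variable {c z p : ℝ}

theorem one_div_mul_one_div_rpow_le_of_le_mul_rpow (hc : 0 < c) (hz : 0 < z) (hp : 1 < p)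
    (h : z ≤ (c * z) ^ p) : 1 / c * (1 / c) ^ (1 / (p - 1)) ≤ z := by
  have hw : 0 < c * z := mul_pos hc hz
  have hpow : 1 / c ≤ (c * z) ^ (p - 1) := by
    rw [rpow_sub_one hw.ne', div_le_div_iff₀ hc hw]
    nlinarith
  have hroot : (1 / c) ^ (1 / (p - 1)) ≤ c * z := by
    rwa [one_div (p - 1), rpow_inv_le_iff_of_pos (by positivity) hw.le (by linarith)]
  calc 1 / c * (1 / c) ^ (1 / (p - 1)) ≤ 1 / c * (c * z) := by gcongr
    _ = z := by field_simp

theorem le_one_div_mul_one_div_rpow_of_mul_rpow_le (hc : 0 < c) (hz : 0 < z) (hp : 1 < p)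
    (h : (c * z) ^ p ≤ z) : z ≤ 1 / c * (1 / c) ^ (1 / (p - 1)) := by
  have hw : 0 < c * z := mul_pos hc hz
  have hpow : (c * z) ^ (p - 1) ≤ 1 / c := by
    rw [rpow_sub_one hw.ne', div_le_div_iff₀ hw hc]
    nlinarith
  have hroot : c * z ≤ (1 / c) ^ (1 / (p - 1)) := by
    rwa [one_div (p - 1), le_rpow_inv_iff_of_pos hw.le (by positivity) (by linarith)]
  calc z = 1 / c * (c * z) := by field_simp
    _ ≤ 1 / c * (1 / c) ^ (1 / (p - 1)) := by gcongr

end Real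

section SwappedBounds

variable {c x y p : ℝ}

theorem one_div_mul_one_div_rpow_le_of_le_mul_rpow_swap (hc : 0 < c) (hx : 0 < x) (hy : 0 < y)
    (hp : 1 < p) (hxy : x ≤ (c * y) ^ p) (hyx : y ≤ (c * x) ^ p) :
    1 / c * (1 / c) ^ (1 / (p - 1)) ≤ x := by
  rcases le_total x y with h | h
  · exact Real.one_div_mul_one_div_rpow_le_of_le_mul_rpow hc hx hp (h.trans hyx)
  · exact (Real.one_div_mul_one_div_rpow_le_of_le_mul_rpow hc hy hp (h.trans hxy)).trans h

theorem le_one_div_mul_one_div_rpow_of_mul_rpow_le_swap (hc : 0 < c) (hx : 0 < x) (hy : 0 < y)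
    (hp : 1 < p) (hxy : (c * y) ^ p ≤ x) (hyx : (c * x) ^ p ≤ y) :
    x ≤ 1 / c * (1 / c) ^ (1 / (p - 1)) := by
  rcases le_total x y with h | h
  · exact h.trans (Real.le_one_div_mul_one_div_rpow_of_mul_rpow_le hc hy hp (hxy.trans h))
  · exact Real.le_one_div_mul_one_div_rpow_of_mul_rpow_le hc hx hp (hyx.trans h)

end SwappedBounds

theorem integral_pow_mem_Icc_of_forall_mem_Icc {φ : ℝ → ℝ} {a b : ℝ} (k : ℕ)
    (hφ : ContinuousOn φ (Icc 0 1)) (ha : 0 ≤ a) (hab : ∀ u ∈ Icc (0:ℝ) 1, φ u ∈ Icc a b) :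
    (∫ u in (0:ℝ)..1, φ u ^ k) ∈ Icc (a ^ k) (b ^ k) := by
  have hint : IntervalIntegrable (fun u => φ u ^ k) volume 0 1 :=
    (hφ.pow k).intervalIntegrable_of_Icc zero_le_one
  constructor
  · simpa using intervalIntegral.integral_mono_on zero_le_one intervalIntegrable_const hint
      fun u hu => pow_le_pow_left₀ ha (hab u hu).1 k
  · simpa using intervalIntegral.integral_mono_on zero_le_one hint intervalIntegrable_const
      fun u hu => pow_le_pow_left₀ (ha.trans (hab u hu).1) (hab u hu).2 k

theorem Hk_mem_Icc {K : ℝ → ℝ → ℝ} {m M : ℝ} {φ : ℝ → ℝ} {t : ℝ} (k : ℕ)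
    (hK : ContinuousOn (fun p : ℝ × ℝ => K p.1 p.2) (Icc 0 1 ×ˢ Icc 0 1))
    (hKm : ∀ u ∈ Icc (0:ℝ) 1, K t u ∈ Icc m M)
    (hφ : ContinuousOn φ (Icc 0 1)) (hφ0 : ∀ u ∈ Icc (0:ℝ) 1, 0 ≤ φ u) (ht : t ∈ Icc (0:ℝ) 1) :
    Hk K k φ t ∈ Icc (m * ∫ u in (0:ℝ)..1, φ u ^ k) (M * ∫ u in (0:ℝ)..1, φ u ^ k) := by
  have hKt : ContinuousOn (K t) (Icc 0 1) :=
    hK.comp (Continuous.prodMk_right t).continuousOn fun u hu => ⟨ht, hu⟩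
  have hint : IntervalIntegrable (fun u => K t u * φ u ^ k) volume 0 1 :=
    (hKt.mul (hφ.pow k)).intervalIntegrable_of_Icc zero_le_one
  have hint' (c : ℝ) : IntervalIntegrable (fun u => c * φ u ^ k) volume 0 1 :=
    (continuousOn_const.mul (hφ.pow k)).intervalIntegrable_of_Icc zero_le_one
  rw [← intervalIntegral.integral_const_mul, ← intervalIntegral.integral_const_mul]
  exact ⟨intervalIntegral.integral_mono_on zero_le_one (hint' m) hint fun u hu =>
      mul_le_mul_of_nonneg_right (hKm u hu).1 (pow_nonneg (hφ0 u hu) k),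
    intervalIntegral.integral_mono_on zero_le_one hint (hint' M) fun u hu =>
      mul_le_mul_of_nonneg_right (hKm u hu).2 (pow_nonneg (hφ0 u hu) k)⟩

theorem le_and_le_of_Hk_two_cycle {K : ℝ → ℝ → ℝ} {k : ℕ} {m M : ℝ} {f g : ℝ → ℝ} (hk : 1 < k)
    (hK : ContinuousOn (fun p : ℝ × ℝ => K p.1 p.2) (Icc 0 1 ×ˢ Icc 0 1))
    (hKmM : ∀ t ∈ Icc (0:ℝ) 1, ∀ u ∈ Icc (0:ℝ) 1, K t u ∈ Icc m M) (hm : 0 < m)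
    (hf : ContinuousOn f (Icc 0 1)) (hg : ContinuousOn g (Icc 0 1))
    (hf0 : ∀ t ∈ Icc (0:ℝ) 1, 0 ≤ f t) (hg0 : ∀ t ∈ Icc (0:ℝ) 1, 0 ≤ g t)
    (hfne : ∃ t ∈ Icc (0:ℝ) 1, f t ≠ 0) (hgne : ∃ t ∈ Icc (0:ℝ) 1, g t ≠ 0)
    (hfg : ∀ t ∈ Icc (0:ℝ) 1, Hk K k f t = g t) (hgf : ∀ t ∈ Icc (0:ℝ) 1, Hk K k g t = f t) :
    ∀ t ∈ Icc (0:ℝ) 1,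
      m / M * (1 / M) ^ ((1:ℝ) / ((k:ℝ) - 1)) ≤ f t ∧
      f t ≤ M / m * (1 / m) ^ ((1:ℝ) / ((k:ℝ) - 1)) := by
  set A := ∫ u in (0:ℝ)..1, f u ^ k
  set B := ∫ u in (0:ℝ)..1, g u ^ k
  have h0 : (0:ℝ) ∈ Icc 0 1 := ⟨le_rfl, zero_le_one⟩
  have hM : 0 < M := hm.trans_le <| (hKmM 0 h0 0 h0).1.trans (hKmM 0 h0 0 h0).2
  have hgA (t) (ht : t ∈ Icc (0:ℝ) 1) : g t ∈ Icc (m * A) (M * A) :=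
    hfg t ht ▸ Hk_mem_Icc k hK (hKmM t ht) hf hf0 ht
  have hfB (t) (ht : t ∈ Icc (0:ℝ) 1) : f t ∈ Icc (m * B) (M * B) :=
    hgf t ht ▸ Hk_mem_Icc k hK (hKmM t ht) hg hg0 ht
  have hApos : 0 < A := by
    obtain ⟨s, hs, hgs⟩ := hgne
    exact pos_of_mul_pos_right (((hg0 s hs).lt_of_ne' hgs).trans_le (hgA s hs).2) hM.le
  have hBpos : 0 < B := by
    obtain ⟨s, hs, hfs⟩ := hfne
    exact pos_of_mul_pos_right (((hf0 s hs).lt_of_ne' hfs).trans_le (hfB s hs).2) hM.le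
  have hA : A ∈ Icc ((m * B) ^ (k:ℝ)) ((M * B) ^ (k:ℝ)) := by
    simpa only [Real.rpow_natCast] using
      integral_pow_mem_Icc_of_forall_mem_Icc k hf (by positivity) hfB
  have hB : B ∈ Icc ((m * A) ^ (k:ℝ)) ((M * A) ^ (k:ℝ)) := by
    simpa only [Real.rpow_natCast] using
      integral_pow_mem_Icc_of_forall_mem_Icc k hg (by positivity) hgA
  have hk' : (1:ℝ) < k := by exact_mod_cast hk
  have hBlow := one_div_mul_one_div_rpow_le_of_le_mul_rpow_swap hM hBpos hApos hk' hB.2 hA.2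
  have hBup := le_one_div_mul_one_div_rpow_of_mul_rpow_le_swap hm hBpos hApos hk' hB.1 hA.1
  intro t ht
  constructor
  · calc m / M * (1 / M) ^ ((1:ℝ) / ((k:ℝ) - 1))
        = m * (1 / M * (1 / M) ^ ((1:ℝ) / ((k:ℝ) - 1))) := by ring
      _ ≤ m * B := by gcongr
      _ ≤ f t := (hfB t ht).1
  · calc f t ≤ M * B := (hfB t ht).2
      _ ≤ M * (1 / m * (1 / m) ^ ((1:ℝ) / ((k:ℝ) - 1))) := by gcongr
      _ = M / m * (1 / m) ^ ((1:ℝ) / ((k:ℝ) - 1)) := by ring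

theorem stmt_5
    (K : ℝ → ℝ → ℝ) (k : ℕ) (hk : 2 ≤ k)
    (hKcont : ContinuousOn (fun p : ℝ × ℝ => K p.1 p.2) (Icc 0 1 ×ˢ Icc 0 1))
    (hKpos : ∀ t ∈ Icc (0:ℝ) 1, ∀ u ∈ Icc (0:ℝ) 1, 0 < K t u)
    (M m : ℝ)
    (hM : IsGreatest ((fun p : ℝ × ℝ => K p.1 p.2) '' (Icc 0 1 ×ˢ Icc 0 1)) M)
    (hm : IsLeast ((fun p : ℝ × ℝ => K p.1 p.2) '' (Icc 0 1 ×ˢ Icc 0 1)) m)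
    (f g : ℝ → ℝ)
    (hf : ContinuousOn f (Icc 0 1)) (hg : ContinuousOn g (Icc 0 1))
    (hfnonneg : ∀ t ∈ Icc (0:ℝ) 1, 0 ≤ f t)
    (hgnonneg : ∀ t ∈ Icc (0:ℝ) 1, 0 ≤ g t)
    (hfne : ∃ t ∈ Icc (0:ℝ) 1, f t ≠ 0)
    (hgne : ∃ t ∈ Icc (0:ℝ) 1, g t ≠ 0)
    (heq1 : ∀ t ∈ Icc (0:ℝ) 1, Hk K k f t = g t)
    (heq2 : ∀ t ∈ Icc (0:ℝ) 1, Hk K k g t = f t) :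
    (∀ t ∈ Icc (0:ℝ) 1,
      m / M * (1 / M) ^ ((1:ℝ)/((k:ℝ) - 1)) ≤ f t ∧
      f t ≤ M / m * (1 / m) ^ ((1:ℝ)/((k:ℝ) - 1))) ∧
    (∀ t ∈ Icc (0:ℝ) 1,
      m / M * (1 / M) ^ ((1:ℝ)/((k:ℝ) - 1)) ≤ g t ∧
      g t ≤ M / m * (1 / m) ^ ((1:ℝ)/((k:ℝ) - 1))) := by
  have hm0 : 0 < m := by
    obtain ⟨⟨t, u⟩, ⟨ht, hu⟩, rfl⟩ := hm.1
    exact hKpos t ht u hu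
  have hKmM : ∀ t ∈ Icc (0:ℝ) 1, ∀ u ∈ Icc (0:ℝ) 1, K t u ∈ Icc m M := fun t ht u hu =>
    ⟨hm.2 ⟨(t, u), ⟨ht, hu⟩, rfl⟩, hM.2 ⟨(t, u), ⟨ht, hu⟩, rfl⟩⟩
  exact ⟨le_and_le_of_Hk_two_cycle hk hKcont hKmM hm0 hf hg hfnonneg hgnonneg hfne hgne heq1 heq2,
    le_and_le_of_Hk_two_cycle hk hKcont hKmM hm0 hg hf hgnonneg hfnonneg hgne hfne heq2 heq1⟩
end

section
/- Let k ≥ 2 be an integer and let f, g be strictly positive continuous functions on [0,1] with f ≠ g. Set δ₁ = sup{δ ∈ [0,∞) : f(t) − δ·g(t) ≥ 0 for all t ∈ [0,1]} and δ₂ = sup{δ ∈ [0,∞) : g(t) − δ·f(t) ≥ 0 for all t ∈ [0,1]}. If max{δ₁, δ₂} ≥ 1, then (f,g) does not satisfy the system (H_k f)(t) = g(t), (H_k g)(t) = f(t) for all t ∈ [0,1]. -/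
open Set MeasureTheory

lemma Hk_mono (K : ℝ → ℝ → ℝ) (k : ℕ)
    (hKcont : ContinuousOn (fun p : ℝ × ℝ => K p.1 p.2) (Icc 0 1 ×ˢ Icc 0 1))
    (hKpos : ∀ t ∈ Icc (0:ℝ) 1, ∀ u ∈ Icc (0:ℝ) 1, 0 < K t u)
    (F G : ℝ → ℝ) (hF : ContinuousOn F (Icc 0 1)) (hG : ContinuousOn G (Icc 0 1))
    (hGnn : ∀ t ∈ Icc (0:ℝ) 1, 0 ≤ G t)
    (hle : ∀ t ∈ Icc (0:ℝ) 1, G t ≤ F t)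
    {t : ℝ} (ht : t ∈ Icc (0:ℝ) 1) :
    Hk K k G t ≤ Hk K k F t := by
  have hKt : ContinuousOn (fun u => K t u) (Icc 0 1) := by
    have : ContinuousOn (fun u : ℝ => ((t, u) : ℝ × ℝ)) (Icc 0 1) :=
      (Continuous.prodMk_right t).continuousOn
    exact hKcont.comp this (fun u hu => ⟨ht, hu⟩)
  have huIcc : uIcc (0:ℝ) 1 = Icc 0 1 := uIcc_of_le (by norm_num)
  have intG : IntervalIntegrable (fun u => K t u * G u ^ k) volume 0 1 := by
    apply ContinuousOn.intervalIntegrable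
    rw [huIcc]; exact hKt.mul (hG.pow k)
  have intF : IntervalIntegrable (fun u => K t u * F u ^ k) volume 0 1 := by
    apply ContinuousOn.intervalIntegrable
    rw [huIcc]; exact hKt.mul (hF.pow k)
  refine intervalIntegral.integral_mono_on (by norm_num) intG intF (fun u hu => ?_)
  exact mul_le_mul_of_nonneg_left (pow_le_pow_left₀ (hGnn u hu) (hle u hu) k)
    (hKpos t ht u hu).le

theorem stmt_6
    (K : ℝ → ℝ → ℝ) (k : ℕ) (hk : 2 ≤ k)
    (hKcont : ContinuousOn (fun p : ℝ × ℝ => K p.1 p.2) (Icc 0 1 ×ˢ Icc 0 1))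
    (hKpos : ∀ t ∈ Icc (0:ℝ) 1, ∀ u ∈ Icc (0:ℝ) 1, 0 < K t u)
    (f g : ℝ → ℝ)
    (hf : ContinuousOn f (Icc 0 1)) (hg : ContinuousOn g (Icc 0 1))
    (hfpos : ∀ t ∈ Icc (0:ℝ) 1, 0 < f t)
    (hgpos : ∀ t ∈ Icc (0:ℝ) 1, 0 < g t)
    (hne : ∃ t ∈ Icc (0:ℝ) 1, f t ≠ g t)
    (δ₁ δ₂ : ℝ)
    (hδ₁ : δ₁ = sSup {δ : ℝ | 0 ≤ δ ∧ ∀ t ∈ Icc (0:ℝ) 1, 0 ≤ f t - δ * g t})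
    (hδ₂ : δ₂ = sSup {δ : ℝ | 0 ≤ δ ∧ ∀ t ∈ Icc (0:ℝ) 1, 0 ≤ g t - δ * f t})
    (hmax : 1 ≤ max δ₁ δ₂) :
    ¬ (∀ t ∈ Icc (0:ℝ) 1, Hk K k f t = g t ∧ Hk K k g t = f t) := by
  intro hsys
  obtain ⟨t₀, ht₀, hne₀⟩ := hne
  -- sup ≥ 1 forces pointwise domination
  have dom : ∀ (F G : ℝ → ℝ), (∀ t ∈ Icc (0:ℝ) 1, 0 < F t) → (∀ t ∈ Icc (0:ℝ) 1, 0 < G t) →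
      1 ≤ sSup {δ : ℝ | 0 ≤ δ ∧ ∀ t ∈ Icc (0:ℝ) 1, 0 ≤ F t - δ * G t} →
      ∀ t ∈ Icc (0:ℝ) 1, G t ≤ F t := by
    intro F G hFpos hGpos h1 t ht
    have hb : sSup {δ : ℝ | 0 ≤ δ ∧ ∀ t ∈ Icc (0:ℝ) 1, 0 ≤ F t - δ * G t} ≤ F t / G t := by
      refine csSup_le ⟨0, ?_⟩ ?_
      · exact ⟨le_refl 0, fun s hs => by simpa using (hFpos s hs).le⟩
      · intro d hd
        have h := hd.2 t ht
        rw [le_div_iff₀ (hGpos t ht)]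
        linarith
    have := h1.trans hb
    rw [one_le_div (hGpos t ht)] at this
    exact this
  rcases le_max_iff.mp hmax with h1 | h1
  · have hfg : ∀ t ∈ Icc (0:ℝ) 1, g t ≤ f t := dom f g hfpos hgpos (hδ₁ ▸ h1)
    have hgf : ∀ t ∈ Icc (0:ℝ) 1, f t ≤ g t := by
      intro t ht
      have := Hk_mono K k hKcont hKpos f g hf hg (fun s hs => (hgpos s hs).le) hfg ht
      rw [(hsys t ht).1, (hsys t ht).2] at this
      exact this
    exact hne₀ (le_antisymm (hgf t₀ ht₀) (hfg t₀ ht₀))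
  · have hfg : ∀ t ∈ Icc (0:ℝ) 1, f t ≤ g t := dom g f hgpos hfpos (hδ₂ ▸ h1)
    have hgf : ∀ t ∈ Icc (0:ℝ) 1, g t ≤ f t := by
      intro t ht
      have := Hk_mono K k hKcont hKpos g f hg hf (fun s hs => (hfpos s hs).le) hfg ht
      rw [(hsys t ht).1, (hsys t ht).2] at this
      exact this
    exact hne₀ (le_antisymm (hfg t₀ ht₀) (hgf t₀ ht₀))
end

section
/- Let k ≥ 2 be an integer. If the kernel K satisfies (M/m)^k − (m/M)^k < 1/k, then the system of equations (H_k f)(t) = g(t), (H_k g)(t) = f(t) for all t ∈ [0,1] has no solution (f,g) with f,g ∈ C₀⁺[0,1] and f ≠ g. -/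
/-
Write `k = n + 1`, `A = ∫ f^k`, `B = ∫ g^k`. Since `m ≤ K ≤ M`, the cycle gives `m B ≤ f ≤ M B`
and `m A ≤ g ≤ M A`, hence `(m B)^k ≤ A` and `(m A)^k ≤ B`; substituting one into the other
yields `m^k C^(k-1) ≤ 1` for `C = max A B`.

Since `f^k - g^k = w (f - g)` with `w = ∑_{i<k} f^i g^(k-1-i) ∈ [0, k (M C)^(k-1)]`, the
difference `u = f - g` satisfies `u(t) = -∫ K(t,s) w(s) u(s) ds`. As `K > 0`, `u` cannot have a
strict sign, so `max u ≥ 0 ≥ min u`. Subtracting the equation at a minimum point from the one at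
a maximum point bounds the oscillation `max u - min u` by `(M - m) k (M C)^(k-1)` times itself,
and the hypothesis on `M / m` makes this factor smaller than `1`. Hence `u = 0`.
-/

open Set MeasureTheory

section IntegralBounds

variable {a b c : ℝ} {φ ψ : ℝ → ℝ}

theorem const_mul_integral_le_integral_mul (hab : a ≤ b) (hψ : IntervalIntegrable ψ volume a b)
    (hφψ : IntervalIntegrable (fun s => φ s * ψ s) volume a b) (hψ0 : ∀ s ∈ Icc a b, 0 ≤ ψ s)
    (hc : ∀ s ∈ Icc a b, c ≤ φ s) :
    c * ∫ s in a..b, ψ s ≤ ∫ s in a..b, φ s * ψ s := by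
  rw [← intervalIntegral.integral_const_mul]
  exact intervalIntegral.integral_mono_on hab (hψ.const_mul c) hφψ fun s hs =>
    mul_le_mul_of_nonneg_right (hc s hs) (hψ0 s hs)

theorem integral_mul_le_const_mul_integral (hab : a ≤ b) (hψ : IntervalIntegrable ψ volume a b)
    (hφψ : IntervalIntegrable (fun s => φ s * ψ s) volume a b) (hψ0 : ∀ s ∈ Icc a b, 0 ≤ ψ s)
    (hc : ∀ s ∈ Icc a b, φ s ≤ c) :
    ∫ s in a..b, φ s * ψ s ≤ c * ∫ s in a..b, ψ s := by
  rw [← intervalIntegral.integral_const_mul]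
  exact intervalIntegral.integral_mono_on hab hφψ (hψ.const_mul c) fun s hs =>
    mul_le_mul_of_nonneg_right (hc s hs) (hψ0 s hs)

end IntegralBounds

theorem sum_pow_mul_pow_sub_le {x y a : ℝ} (n : ℕ) (hx : 0 ≤ x) (hy : 0 ≤ y) (hxa : x ≤ a)
    (hya : y ≤ a) : ∑ i ∈ Finset.range (n + 1), x ^ i * y ^ (n - i) ≤ (n + 1) * a ^ n := by
  have hterm : ∀ i ∈ Finset.range (n + 1), x ^ i * y ^ (n - i) ≤ a ^ n := fun i hi => calc
    x ^ i * y ^ (n - i) ≤ a ^ i * a ^ (n - i) := by have := hx.trans hxa; gcongr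
    _ = a ^ n := pow_mul_pow_sub a (Nat.lt_succ_iff.mp (Finset.mem_range.mp hi))
  simpa using Finset.sum_le_card_nsmul _ _ _ hterm

theorem pow_succ_mul_pow_le_one {m X Y : ℝ} (n : ℕ) (hm : 0 ≤ m) (hX : 0 < X)
    (hXY : (m * Y) ^ (n + 1) ≤ X) (hYX : (m * X) ^ (n + 1) ≤ Y) : m ^ (n + 1) * X ^ n ≤ 1 := by
  have h : (m ^ (n + 1) * X ^ n) ^ (n + 2) * X ≤ 1 * X := calc
    (m ^ (n + 1) * X ^ n) ^ (n + 2) * X = (m * (m * X) ^ (n + 1)) ^ (n + 1) := by ring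
    _ ≤ (m * Y) ^ (n + 1) := by gcongr
    _ ≤ 1 * X := by rwa [one_mul]
  exact (pow_le_one_iff_of_nonneg (by positivity) (by omega)).mp (le_of_mul_le_mul_right h hX)

theorem sub_mul_mul_pow_lt_one {m M C : ℝ} (n : ℕ) (hm : 0 < m) (hmM : m ≤ M)
    (hmC : m ^ (n + 1) * C ^ n ≤ 1)
    (hcond : (M / m) ^ (n + 1) - (m / M) ^ (n + 1) < 1 / ((n + 1 : ℕ) : ℝ)) :
    (M - m) * ((n + 1) * (M * C) ^ n) < 1 := by
  set r := M / m with hr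
  have hMr : M = r * m := by rw [hr, div_mul_cancel₀ _ hm.ne']
  have hr1 : 1 ≤ r := (one_le_div hm).mpr hmM
  have hinv : (m / M) ^ (n + 1) ≤ r ^ n := by
    calc (m / M) ^ (n + 1) ≤ 1 :=
          pow_le_one₀ (div_nonneg hm.le (by linarith)) (div_le_one_of_le₀ hmM (by linarith))
      _ ≤ r ^ n := one_le_pow₀ hr1
  have hgap : 0 ≤ r ^ (n + 1) - r ^ n := by
    rw [pow_succ]; nlinarith [one_le_pow₀ (n := n) hr1]
  push_cast at hcond
  rw [lt_div_iff₀ (by positivity)] at hcond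
  calc (M - m) * ((n + 1) * (M * C) ^ n)
      = (r ^ (n + 1) - r ^ n) * (n + 1) * (m ^ (n + 1) * C ^ n) := by rw [hMr]; ring
    _ ≤ (r ^ (n + 1) - r ^ n) * (n + 1) * 1 := by gcongr
    _ < 1 := by nlinarith

structure IsBoundedKernel (K : ℝ → ℝ → ℝ) (m M : ℝ) : Prop where
  continuousOn : ∀ t ∈ Icc (0:ℝ) 1, ContinuousOn (K t) (Icc 0 1)
  lower_le : ∀ t ∈ Icc (0:ℝ) 1, ∀ s ∈ Icc (0:ℝ) 1, m ≤ K t s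
  le_upper : ∀ t ∈ Icc (0:ℝ) 1, ∀ s ∈ Icc (0:ℝ) 1, K t s ≤ M

theorem isBoundedKernel_of_isLeast_of_isGreatest {K : ℝ → ℝ → ℝ} {m M : ℝ}
    (hK : ContinuousOn (fun p : ℝ × ℝ => K p.1 p.2) (Icc 0 1 ×ˢ Icc 0 1))
    (hm : IsLeast ((fun p : ℝ × ℝ => K p.1 p.2) '' (Icc 0 1 ×ˢ Icc 0 1)) m)
    (hM : IsGreatest ((fun p : ℝ × ℝ => K p.1 p.2) '' (Icc 0 1 ×ˢ Icc 0 1)) M) :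
    IsBoundedKernel K m M where
  continuousOn t ht := hK.comp (Continuous.prodMk_right t).continuousOn fun _ hs => ⟨ht, hs⟩
  lower_le t ht s hs := hm.2 ⟨(t, s), ⟨ht, hs⟩, rfl⟩
  le_upper t ht s hs := hM.2 ⟨(t, s), ⟨ht, hs⟩, rfl⟩

namespace IsBoundedKernel

variable {K : ℝ → ℝ → ℝ} {m M : ℝ} {f g : ℝ → ℝ} {t : ℝ}


theorem lower_le_upper (hK : IsBoundedKernel K m M) : m ≤ M :=
  (hK.lower_le 0 ⟨le_rfl, zero_le_one⟩ 0 ⟨le_rfl, zero_le_one⟩).trans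
    (hK.le_upper 0 ⟨le_rfl, zero_le_one⟩ 0 ⟨le_rfl, zero_le_one⟩)

theorem intervalIntegrable_mul (hK : IsBoundedKernel K m M) (ht : t ∈ Icc (0:ℝ) 1)
    (hf : ContinuousOn f (Icc 0 1)) : IntervalIntegrable (fun s => K t s * f s) volume 0 1 :=
  ((hK.continuousOn t ht).mul hf).intervalIntegrable_of_Icc zero_le_one

theorem mul_integral_le_Hk (hK : IsBoundedKernel K m M) (k : ℕ) (ht : t ∈ Icc (0:ℝ) 1)
    (hf : ContinuousOn f (Icc 0 1)) (hf0 : ∀ s ∈ Icc (0:ℝ) 1, 0 ≤ f s) :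
    m * ∫ s in (0:ℝ)..1, f s ^ k ≤ Hk K k f t :=
  const_mul_integral_le_integral_mul zero_le_one
    ((hf.pow k).intervalIntegrable_of_Icc zero_le_one) (hK.intervalIntegrable_mul ht (hf.pow k))
    (fun s hs => pow_nonneg (hf0 s hs) k) (hK.lower_le t ht)

theorem Hk_le_mul_integral (hK : IsBoundedKernel K m M) (k : ℕ) (ht : t ∈ Icc (0:ℝ) 1)
    (hf : ContinuousOn f (Icc 0 1)) (hf0 : ∀ s ∈ Icc (0:ℝ) 1, 0 ≤ f s) :
    Hk K k f t ≤ M * ∫ s in (0:ℝ)..1, f s ^ k :=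
  integral_mul_le_const_mul_integral zero_le_one
    ((hf.pow k).intervalIntegrable_of_Icc zero_le_one) (hK.intervalIntegrable_mul ht (hf.pow k))
    (fun s hs => pow_nonneg (hf0 s hs) k) (hK.le_upper t ht)

theorem Hk_sub_Hk (hK : IsBoundedKernel K m M) (n : ℕ) (ht : t ∈ Icc (0:ℝ) 1)
    (hf : ContinuousOn f (Icc 0 1)) (hg : ContinuousOn g (Icc 0 1)) :
    Hk K (n + 1) g t - Hk K (n + 1) f t = -∫ s in (0:ℝ)..1,
      K t s * ((∑ i ∈ Finset.range (n + 1), f s ^ i * g s ^ (n - i)) * (f s - g s)) := by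
  rw [Hk, Hk, ← intervalIntegral.integral_sub
    (hK.intervalIntegrable_mul (f := fun s => g s ^ (n + 1)) ht (hg.pow _))
    (hK.intervalIntegrable_mul (f := fun s => f s ^ (n + 1)) ht (hf.pow _)),
    ← intervalIntegral.integral_neg]
  congr 1 with s
  have := geom_sum₂_mul (f s) (g s) (n + 1)
  simp only [add_tsub_cancel_right] at this
  rw [this]
  ring


theorem integral_pos_of_Hk_eq (hK : IsBoundedKernel K m M) (k : ℕ)
    (hf : ContinuousOn f (Icc 0 1)) (hf0 : ∀ s ∈ Icc (0:ℝ) 1, 0 ≤ f s)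
    (hg0 : ∀ s ∈ Icc (0:ℝ) 1, 0 ≤ g s) (hg_ne : ∃ t ∈ Icc (0:ℝ) 1, g t ≠ 0)
    (hfg : ∀ t ∈ Icc (0:ℝ) 1, Hk K k f t = g t) : 0 < ∫ s in (0:ℝ)..1, f s ^ k := by
  obtain ⟨t, ht, hgt⟩ := hg_ne
  have hA : 0 ≤ ∫ s in (0:ℝ)..1, f s ^ k :=
    intervalIntegral.integral_nonneg zero_le_one fun s hs => pow_nonneg (hf0 s hs) k
  refine hA.lt_of_ne fun h => hgt (le_antisymm ?_ (hg0 t ht))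
  simpa [← h, hfg t ht] using hK.Hk_le_mul_integral k ht hf hf0

theorem pow_mul_integral_le_integral_of_Hk_eq (hK : IsBoundedKernel K m M) (hm : 0 ≤ m) (k : ℕ)
    (hf : ContinuousOn f (Icc 0 1)) (hg : ContinuousOn g (Icc 0 1))
    (hg0 : ∀ s ∈ Icc (0:ℝ) 1, 0 ≤ g s) (hgf : ∀ t ∈ Icc (0:ℝ) 1, Hk K k g t = f t) :
    (m * ∫ s in (0:ℝ)..1, g s ^ k) ^ k ≤ ∫ s in (0:ℝ)..1, f s ^ k := by
  have hB : 0 ≤ ∫ s in (0:ℝ)..1, g s ^ k :=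
    intervalIntegral.integral_nonneg zero_le_one fun s hs => pow_nonneg (hg0 s hs) k
  calc (m * ∫ s in (0:ℝ)..1, g s ^ k) ^ k
      = ∫ _ in (0:ℝ)..1, (m * ∫ s in (0:ℝ)..1, g s ^ k) ^ k := by simp
    _ ≤ ∫ s in (0:ℝ)..1, f s ^ k :=
        intervalIntegral.integral_mono_on zero_le_one intervalIntegrable_const
          ((hf.pow k).intervalIntegrable_of_Icc zero_le_one) fun s hs =>
          pow_le_pow_left₀ (by positivity) (hgf s hs ▸ hK.mul_integral_le_Hk k hs hg hg0) k

theorem exists_bound_of_Hk_cycle (hK : IsBoundedKernel K m M) (hm : 0 ≤ m) (n : ℕ)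
    (hf : ContinuousOn f (Icc 0 1)) (hg : ContinuousOn g (Icc 0 1))
    (hf0 : ∀ s ∈ Icc (0:ℝ) 1, 0 ≤ f s) (hg0 : ∀ s ∈ Icc (0:ℝ) 1, 0 ≤ g s)
    (hf_ne : ∃ t ∈ Icc (0:ℝ) 1, f t ≠ 0) (hg_ne : ∃ t ∈ Icc (0:ℝ) 1, g t ≠ 0)
    (hfg : ∀ t ∈ Icc (0:ℝ) 1, Hk K (n + 1) f t = g t)
    (hgf : ∀ t ∈ Icc (0:ℝ) 1, Hk K (n + 1) g t = f t) :
    ∃ C, m ^ (n + 1) * C ^ n ≤ 1 ∧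
      (∀ t ∈ Icc (0:ℝ) 1, f t ≤ M * C) ∧ ∀ t ∈ Icc (0:ℝ) 1, g t ≤ M * C := by
  set A := ∫ s in (0:ℝ)..1, f s ^ (n + 1)
  set B := ∫ s in (0:ℝ)..1, g s ^ (n + 1)
  have hA := hK.integral_pos_of_Hk_eq (n + 1) hf hf0 hg0 hg_ne hfg
  have hB := hK.integral_pos_of_Hk_eq (n + 1) hg hg0 hf0 hf_ne hgf
  have hAB := hK.pow_mul_integral_le_integral_of_Hk_eq hm (n + 1) hf hg hg0 hgf
  have hBA := hK.pow_mul_integral_le_integral_of_Hk_eq hm (n + 1) hg hf hf0 hfg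
  have hM : 0 ≤ M := hm.trans hK.lower_le_upper
  refine ⟨max A B, ?_, fun t ht => ?_, fun t ht => ?_⟩
  · rcases max_cases A B with ⟨h, -⟩ | ⟨h, -⟩ <;> rw [h]
    exacts [pow_succ_mul_pow_le_one n hm hA hAB hBA, pow_succ_mul_pow_le_one n hm hB hBA hAB]
  · rw [← hgf t ht]
    exact (hK.Hk_le_mul_integral _ ht hg hg0).trans (by gcongr; exact le_max_right A B)
  · rw [← hfg t ht]
    exact (hK.Hk_le_mul_integral _ ht hf hf0).trans (by gcongr; exact le_max_left A B)

theorem exists_nonneg_of_eq_neg_integral (hK : IsBoundedKernel K m M) (hm : 0 ≤ m)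
    {u w : ℝ → ℝ} (hw0 : ∀ s ∈ Icc (0:ℝ) 1, 0 ≤ w s)
    (heq : ∀ t ∈ Icc (0:ℝ) 1, u t = -∫ s in (0:ℝ)..1, K t s * (w s * u s)) :
    ∃ t ∈ Icc (0:ℝ) 1, 0 ≤ u t := by
  by_contra! hneg
  have h0 : (0:ℝ) ∈ Icc (0:ℝ) 1 := ⟨le_rfl, zero_le_one⟩
  refine (hneg 0 h0).not_ge ?_
  rw [heq 0 h0, ← intervalIntegral.integral_neg]
  refine intervalIntegral.integral_nonneg zero_le_one fun s hs => ?_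
  have := mul_nonpos_of_nonneg_of_nonpos (hw0 s hs) (hneg s hs).le
  nlinarith [hK.lower_le 0 h0 s hs]

theorem sub_le_of_eq_neg_integral (hK : IsBoundedKernel K m M) {u w : ℝ → ℝ} {W N : ℝ}
    (hu : ContinuousOn u (Icc 0 1)) (hw : ContinuousOn w (Icc 0 1))
    (hw0 : ∀ s ∈ Icc (0:ℝ) 1, 0 ≤ w s) (hwW : ∀ s ∈ Icc (0:ℝ) 1, w s ≤ W)
    (hN : ∀ s ∈ Icc (0:ℝ) 1, |u s| ≤ N)
    (heq : ∀ t ∈ Icc (0:ℝ) 1, u t = -∫ s in (0:ℝ)..1, K t s * (w s * u s))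
    {t₁ t₂ : ℝ} (ht₁ : t₁ ∈ Icc (0:ℝ) 1) (ht₂ : t₂ ∈ Icc (0:ℝ) 1) :
    u t₁ - u t₂ ≤ (M - m) * W * N := by
  have hwu : ContinuousOn (fun s => w s * u s) (Icc 0 1) := hw.mul hu
  have hpt : ∀ s ∈ Icc (0:ℝ) 1, (K t₂ s - K t₁ s) * (w s * u s) ≤ (M - m) * W * N := by
    intro s hs
    have hK₂₁ : |K t₂ s - K t₁ s| ≤ M - m := abs_sub_le_iff.mpr
      ⟨by linarith [hK.le_upper t₂ ht₂ s hs, hK.lower_le t₁ ht₁ s hs],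
       by linarith [hK.le_upper t₁ ht₁ s hs, hK.lower_le t₂ ht₂ s hs]⟩
    calc (K t₂ s - K t₁ s) * (w s * u s) ≤ |K t₂ s - K t₁ s| * (w s * |u s|) :=
          (le_abs_self _).trans_eq (by rw [abs_mul, abs_mul, abs_of_nonneg (hw0 s hs)])
      _ ≤ (M - m) * (W * N) :=
          mul_le_mul hK₂₁ (mul_le_mul (hwW s hs) (hN s hs) (abs_nonneg _)
            ((hw0 s hs).trans (hwW s hs))) (mul_nonneg (hw0 s hs) (abs_nonneg _))
            (sub_nonneg.mpr hK.lower_le_upper)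
      _ = (M - m) * W * N := by ring
  calc u t₁ - u t₂ = ∫ s in (0:ℝ)..1, (K t₂ s - K t₁ s) * (w s * u s) := by
        simp_rw [sub_mul]
        rw [intervalIntegral.integral_sub (hK.intervalIntegrable_mul ht₂ hwu)
          (hK.intervalIntegrable_mul ht₁ hwu), heq t₁ ht₁, heq t₂ ht₂]
        ring
    _ ≤ ∫ _ in (0:ℝ)..1, (M - m) * W * N :=
        intervalIntegral.integral_mono_on zero_le_one
          ((((hK.continuousOn t₂ ht₂).sub (hK.continuousOn t₁ ht₁)).mul
            hwu).intervalIntegrable_of_Icc zero_le_one) intervalIntegrable_const hpt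
    _ = (M - m) * W * N := by simp

theorem eq_zero_of_eq_neg_integral (hK : IsBoundedKernel K m M) (hm : 0 ≤ m)
    {u w : ℝ → ℝ} {W : ℝ} (hu : ContinuousOn u (Icc 0 1)) (hw : ContinuousOn w (Icc 0 1))
    (hw0 : ∀ s ∈ Icc (0:ℝ) 1, 0 ≤ w s) (hwW : ∀ s ∈ Icc (0:ℝ) 1, w s ≤ W)
    (hsmall : (M - m) * W < 1)
    (heq : ∀ t ∈ Icc (0:ℝ) 1, u t = -∫ s in (0:ℝ)..1, K t s * (w s * u s)) :
    ∀ t ∈ Icc (0:ℝ) 1, u t = 0 := by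
  obtain ⟨t₁, ht₁, hmax⟩ := isCompact_Icc.exists_isMaxOn (nonempty_Icc.2 zero_le_one) hu
  obtain ⟨t₂, ht₂, hmin⟩ := isCompact_Icc.exists_isMinOn (nonempty_Icc.2 zero_le_one) hu
  replace hmax : ∀ s ∈ Icc (0:ℝ) 1, u s ≤ u t₁ := fun s hs => hmax hs
  replace hmin : ∀ s ∈ Icc (0:ℝ) 1, u t₂ ≤ u s := fun s hs => hmin hs
  have heq_neg : ∀ t ∈ Icc (0:ℝ) 1, -u t = -∫ s in (0:ℝ)..1, K t s * (w s * -u s) := by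
    intro t ht
    simp [heq t ht, intervalIntegral.integral_neg]
  obtain ⟨s₁, hs₁, hu₁⟩ := hK.exists_nonneg_of_eq_neg_integral hm hw0 heq
  obtain ⟨s₂, hs₂, hu₂⟩ := hK.exists_nonneg_of_eq_neg_integral hm hw0 heq_neg
  have hD : 0 ≤ u t₁ := hu₁.trans (hmax s₁ hs₁)
  have hE : u t₂ ≤ 0 := (hmin s₂ hs₂).trans (by linarith)
  have hosc := hK.sub_le_of_eq_neg_integral (N := u t₁ - u t₂) hu hw hw0 hwW
    (fun s hs => abs_le.mpr ⟨by linarith [hmin s hs], by linarith [hmax s hs]⟩) heq ht₁ ht₂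
  have hosc_zero : u t₁ - u t₂ ≤ 0 := by nlinarith
  intro t ht
  linarith [hmax t ht, hmin t ht]

end IsBoundedKernel

theorem stmt_9_general
    (K : ℝ → ℝ → ℝ) (k : ℕ)
    (hKcont : ContinuousOn (fun p : ℝ × ℝ => K p.1 p.2) (Icc 0 1 ×ˢ Icc 0 1))
    (hKpos : ∀ t ∈ Icc (0:ℝ) 1, ∀ u ∈ Icc (0:ℝ) 1, 0 < K t u)
    (M m : ℝ)
    (hM : IsGreatest ((fun p : ℝ × ℝ => K p.1 p.2) '' (Icc 0 1 ×ˢ Icc 0 1)) M)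
    (hm : IsLeast ((fun p : ℝ × ℝ => K p.1 p.2) '' (Icc 0 1 ×ˢ Icc 0 1)) m)
    (hcond : (M / m) ^ k - (m / M) ^ k < 1 / (k : ℝ)) :
    ¬ ∃ f g : ℝ → ℝ,
      ContinuousOn f (Icc 0 1) ∧ ContinuousOn g (Icc 0 1) ∧
      (∀ t ∈ Icc (0:ℝ) 1, 0 ≤ f t) ∧ (∀ t ∈ Icc (0:ℝ) 1, 0 ≤ g t) ∧
      (∃ t ∈ Icc (0:ℝ) 1, f t ≠ 0) ∧ (∃ t ∈ Icc (0:ℝ) 1, g t ≠ 0) ∧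
      (∃ t ∈ Icc (0:ℝ) 1, f t ≠ g t) ∧
      (∀ t ∈ Icc (0:ℝ) 1, Hk K k f t = g t) ∧
      (∀ t ∈ Icc (0:ℝ) 1, Hk K k g t = f t) := by
  rintro ⟨f, g, hf, hg, hf0, hg0, hf_ne, hg_ne, ⟨t, ht, hfgt⟩, hfg, hgf⟩
  -- `k = 0` is excluded by `hcond`, which then reads `0 < 1 / 0 = 0`.
  obtain ⟨n, rfl⟩ : ∃ n, k = n + 1 :=
    Nat.exists_eq_succ_of_ne_zero (by rintro rfl; norm_num at hcond)
  have hK := isBoundedKernel_of_isLeast_of_isGreatest hKcont hm hM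
  have hm0 : 0 < m := by
    obtain ⟨p, hp, rfl⟩ := hm.1
    exact hKpos _ hp.1 _ hp.2
  obtain ⟨C, hmC, hfC, hgC⟩ :=
    hK.exists_bound_of_Hk_cycle hm0.le n hf hg hf0 hg0 hf_ne hg_ne hfg hgf
  set w := fun s => ∑ i ∈ Finset.range (n + 1), f s ^ i * g s ^ (n - i)
  have hvanish := hK.eq_zero_of_eq_neg_integral hm0.le (u := fun s => f s - g s) (w := w)
    (hf.sub hg) (continuousOn_finsetSum _ fun i _ => (hf.pow i).mul (hg.pow _))
    (fun s hs => Finset.sum_nonneg fun i _ => mul_nonneg (pow_nonneg (hf0 s hs) _)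
      (pow_nonneg (hg0 s hs) _))
    (fun s hs => sum_pow_mul_pow_sub_le n (hf0 s hs) (hg0 s hs) (hfC s hs) (hgC s hs))
    (sub_mul_mul_pow_lt_one n hm0 hK.lower_le_upper hmC hcond)
    (fun s hs => by rw [← hfg s hs, ← hgf s hs]; exact hK.Hk_sub_Hk n hs hf hg)
  exact hfgt (sub_eq_zero.mp (hvanish t ht))

theorem stmt_9
    (K : ℝ → ℝ → ℝ) (k : ℕ) (hk : 2 ≤ k)
    (hKcont : ContinuousOn (fun p : ℝ × ℝ => K p.1 p.2) (Icc 0 1 ×ˢ Icc 0 1))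
    (hKpos : ∀ t ∈ Icc (0:ℝ) 1, ∀ u ∈ Icc (0:ℝ) 1, 0 < K t u)
    (M m : ℝ)
    (hM : IsGreatest ((fun p : ℝ × ℝ => K p.1 p.2) '' (Icc 0 1 ×ˢ Icc 0 1)) M)
    (hm : IsLeast ((fun p : ℝ × ℝ => K p.1 p.2) '' (Icc 0 1 ×ˢ Icc 0 1)) m)
    (hcond : (M / m) ^ k - (m / M) ^ k < 1 / (k : ℝ)) :
    ¬ ∃ f g : ℝ → ℝ,
      ContinuousOn f (Icc 0 1) ∧ ContinuousOn g (Icc 0 1) ∧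
      (∀ t ∈ Icc (0:ℝ) 1, 0 ≤ f t) ∧ (∀ t ∈ Icc (0:ℝ) 1, 0 ≤ g t) ∧
      (∃ t ∈ Icc (0:ℝ) 1, f t ≠ 0) ∧ (∃ t ∈ Icc (0:ℝ) 1, g t ≠ 0) ∧
      (∃ t ∈ Icc (0:ℝ) 1, f t ≠ g t) ∧
      (∀ t ∈ Icc (0:ℝ) 1, Hk K k f t = g t) ∧
      (∀ t ∈ Icc (0:ℝ) 1, Hk K k g t = f t) :=
  stmt_9_general K k hKcont hKpos M m hM hm hcond
end

section
/- Let k ≥ 2 be an integer. If the kernel K satisfies (M/m)^k − (m/M)^k < 1/k, then the system of equations (A_k f)(t) = g(t), (A_k g)(t) = f(t) for all t ∈ [0,1] has no solution (f,g) with f,g ∈ C₀⁺[0,1] and f ≠ g. -/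
open Set MeasureTheory
set_option maxHeartbeats 2000000

lemma numeric (k : ℕ) (hk : 2 ≤ k) (β : ℝ) (hβ : 1 ≤ β)
    (h : β ^ k - (β ^ k)⁻¹ < 1 / k) :
    (k : ℝ) * β ^ (k - 1) * (β ^ 2 - 1) * β ^ k < 1 := by
  have hβ0 : (0:ℝ) < β := lt_of_lt_of_le one_pos hβ
  have hk0 : (0:ℝ) < k := by positivity
  set x := β ^ k with hxdef
  have hx1 : (1:ℝ) ≤ x := one_le_pow₀ hβ
  have hx0 : (0:ℝ) < x := lt_of_lt_of_le one_pos hx1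
  -- Step A : x^2 ≤ k
  have hxsq : x ^ 2 ≤ (k : ℝ) := by
    by_contra hcon
    push_neg at hcon
    set s := Real.sqrt k with hs
    have hs0 : 0 < s := Real.sqrt_pos.mpr hk0
    have hs1 : 1 ≤ s := Real.one_le_sqrt.mpr (by exact_mod_cast Nat.one_le_of_lt hk)
    have hssq : s ^ 2 = (k:ℝ) := Real.sq_sqrt hk0.le
    have hsx : s < x := by
      nlinarith [Real.sqrt_nonneg (k:ℝ)]
    have h1 : s - s⁻¹ ≤ x - x⁻¹ := by
      have : x⁻¹ ≤ s⁻¹ := by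
        apply inv_anti₀ hs0 hsx.le
      linarith
    have h2 : ((k:ℝ) - 1) / s = s - s⁻¹ := by
      field_simp
      nlinarith
    have hsk : s ≤ (k:ℝ) := by
      nlinarith [Real.sq_sqrt hk0.le, Real.sqrt_nonneg (k:ℝ)]
    have h3 : 1 / (k:ℝ) ≤ ((k:ℝ) - 1) / s := by
      rw [div_le_div_iff₀ hk0 hs0]
      have hk2 : (2:ℝ) ≤ (k:ℝ) := by exact_mod_cast hk
      nlinarith
    linarith
  -- Step B : k * β^(k-1) * (β^2-1) ≤ β^(2k) - 1
  have hsum : (k:ℝ) * β ^ (k - 1) ≤ ∑ i ∈ Finset.range k, (β ^ 2) ^ i := by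
    have key : ∀ i ∈ Finset.range k, 2 * β ^ (k-1) ≤ (β ^ 2) ^ i + (β ^ 2) ^ (k - 1 - i) := by
      intro i hi
      rw [Finset.mem_range] at hi
      have hik : i + (k - 1 - i) = k - 1 := by omega
      have e1 : (β ^ 2) ^ i = (β ^ i) ^ 2 := by ring
      have e2 : (β ^ 2) ^ (k-1-i) = (β ^ (k-1-i)) ^ 2 := by ring
      have e3 : β ^ i * β ^ (k-1-i) = β ^ (k-1) := by
        rw [← pow_add, hik]
      nlinarith [sq_nonneg (β ^ i - β ^ (k-1-i))]
    have h2 : 2 * ((k:ℝ) * β ^ (k-1)) ≤ 2 * ∑ i ∈ Finset.range k, (β ^ 2) ^ i := by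
      have := Finset.sum_le_sum key
      rw [Finset.sum_const, Finset.card_range, nsmul_eq_mul] at this
      have hrefl : ∑ i ∈ Finset.range k, (β ^ 2) ^ (k - 1 - i) = ∑ i ∈ Finset.range k, (β ^ 2) ^ i :=
        Finset.sum_range_reflect (fun i => (β ^ 2) ^ i) k
      calc 2 * ((k:ℝ) * β ^ (k-1)) = (k:ℝ) * (2 * β ^ (k-1)) := by ring
        _ ≤ ∑ i ∈ Finset.range k, ((β ^ 2) ^ i + (β ^ 2) ^ (k - 1 - i)) := this
        _ = 2 * ∑ i ∈ Finset.range k, (β ^ 2) ^ i := by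
            rw [Finset.sum_add_distrib, hrefl]; ring
    linarith
  have hgeom : (∑ i ∈ Finset.range k, (β ^ 2) ^ i) * (β ^ 2 - 1) = (β ^ 2) ^ k - 1 :=
    geom_sum_mul (β ^ 2) k
  have hB : (k:ℝ) * β ^ (k-1) * (β ^ 2 - 1) ≤ (β ^ 2) ^ k - 1 := by
    have hb2 : (0:ℝ) ≤ β ^ 2 - 1 := by nlinarith
    calc (k:ℝ) * β ^ (k-1) * (β ^ 2 - 1) ≤ (∑ i ∈ Finset.range k, (β ^ 2) ^ i) * (β ^ 2 - 1) :=
          mul_le_mul_of_nonneg_right hsum hb2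
      _ = (β ^ 2) ^ k - 1 := hgeom
  -- combine
  have hb2k : (β ^ 2) ^ k = x ^ 2 := by rw [hxdef]; ring
  have hfinal : (k : ℝ) * β ^ (k - 1) * (β ^ 2 - 1) * β ^ k ≤ x ^ 2 * (x - x⁻¹) := by
    have h1 : (k : ℝ) * β ^ (k - 1) * (β ^ 2 - 1) * β ^ k ≤ ((β ^ 2) ^ k - 1) * x :=
      mul_le_mul_of_nonneg_right hB hx0.le
    have h2 : ((β ^ 2) ^ k - 1) * x = x ^ 2 * (x - x⁻¹) := by
      rw [hb2k]; field_simp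
    linarith
  have hxi : 0 ≤ x - x⁻¹ := by
    have : x⁻¹ ≤ 1 := inv_le_one_of_one_le₀ hx1
    linarith
  calc (k : ℝ) * β ^ (k - 1) * (β ^ 2 - 1) * β ^ k ≤ x ^ 2 * (x - x⁻¹) := hfinal
    _ ≤ (k:ℝ) * (x - x⁻¹) := mul_le_mul_of_nonneg_right hxsq hxi
    _ < (k:ℝ) * (1 / k) := by
        apply mul_lt_mul_of_pos_left h hk0
    _ = 1 := by field_simp

lemma integral_pos_of_ne (f : ℝ → ℝ) (hc : ContinuousOn f (Icc 0 1))
    (h0 : ∀ t ∈ Icc (0:ℝ) 1, 0 ≤ f t) (t₁ : ℝ) (ht₁ : t₁ ∈ Icc (0:ℝ) 1)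
    (h1 : f t₁ ≠ 0) : 0 < ∫ u in (0:ℝ)..1, f u := by
  have hft : 0 < f t₁ := (h0 t₁ ht₁).lt_of_ne (Ne.symm h1)
  have hcw : ContinuousWithinAt f (Icc 0 1) t₁ := hc t₁ ht₁
  rw [Metric.continuousWithinAt_iff] at hcw
  obtain ⟨δ, hδ0, hδ⟩ := hcw (f t₁ / 2) (by linarith)
  set δ' := min (δ / 2) (1 / 2) with hδ'
  have hδ'0 : 0 < δ' := lt_min (by linarith) (by norm_num)
  set c := max 0 (t₁ - δ') with hc'
  set d := min 1 (t₁ + δ') with hd'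
  obtain ⟨h01, h11⟩ := ht₁
  have hcd : c < d := by
    apply max_lt
    · exact lt_min one_pos (by linarith)
    · exact lt_min (by linarith) (by linarith)
  have hc0 : 0 ≤ c := le_max_left _ _
  have hd1 : d ≤ 1 := min_le_left _ _
  have hlow : ∀ x ∈ Icc c d, f t₁ / 2 ≤ f x := by
    intro x hx
    have hx0 : x ∈ Icc (0:ℝ) 1 := ⟨le_trans hc0 hx.1, le_trans hx.2 hd1⟩
    have hxd : dist x t₁ < δ := by
      rw [Real.dist_eq, abs_lt]
      constructor
      · have : t₁ - δ' ≤ c := le_max_right _ _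
        have hδ'2 : δ' ≤ δ / 2 := min_le_left _ _
        nlinarith [hx.1]
      · have : d ≤ t₁ + δ' := min_le_right _ _
        have hδ'2 : δ' ≤ δ / 2 := min_le_left _ _
        nlinarith [hx.2]
    have := hδ hx0 hxd
    rw [Real.dist_eq, abs_lt] at this
    linarith [this.1]
  have hint : IntervalIntegrable f volume 0 1 := by
    apply ContinuousOn.intervalIntegrable
    rwa [uIcc_of_le zero_le_one]
  have hint1 : IntervalIntegrable f volume 0 c :=
    hint.mono_set (by rw [uIcc_of_le hc0, uIcc_of_le zero_le_one]; exact Icc_subset_Icc le_rfl (le_trans hcd.le hd1))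
  have hint2 : IntervalIntegrable f volume c d :=
    hint.mono_set (by rw [uIcc_of_le hcd.le, uIcc_of_le zero_le_one]; exact Icc_subset_Icc hc0 hd1)
  have hint3 : IntervalIntegrable f volume d 1 :=
    hint.mono_set (by rw [uIcc_of_le hd1, uIcc_of_le zero_le_one]; exact Icc_subset_Icc (le_trans hc0 hcd.le) le_rfl)
  have hsplit : (∫ u in (0:ℝ)..1, f u) = (∫ u in (0:ℝ)..c, f u) + (∫ u in c..d, f u) + (∫ u in d..(1:ℝ), f u) := by
    rw [intervalIntegral.integral_add_adjacent_intervals hint1 hint2,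
      intervalIntegral.integral_add_adjacent_intervals (hint1.trans hint2) hint3]
  have h1' : 0 ≤ ∫ u in (0:ℝ)..c, f u :=
    intervalIntegral.integral_nonneg hc0 (fun u hu => h0 u ⟨hu.1, le_trans hu.2 (le_trans hcd.le hd1)⟩)
  have h3' : 0 ≤ ∫ u in d..(1:ℝ), f u :=
    intervalIntegral.integral_nonneg hd1 (fun u hu => h0 u ⟨le_trans (le_trans hc0 hcd.le) hu.1, hu.2⟩)
  have h2' : (d - c) * (f t₁ / 2) ≤ ∫ u in c..d, f u := by
    have := intervalIntegral.integral_mono_on hcd.le (intervalIntegrable_const) hint2 hlow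
    rwa [intervalIntegral.integral_const, smul_eq_mul] at this
  have : 0 < (d - c) * (f t₁ / 2) := by
    apply mul_pos (by linarith) (by linarith)
  linarith

theorem stmt_10
    (K : ℝ → ℝ → ℝ) (k : ℕ) (hk : 2 ≤ k)
    (hKcont : ContinuousOn (fun p : ℝ × ℝ => K p.1 p.2) (Icc 0 1 ×ˢ Icc 0 1))
    (hKpos : ∀ t ∈ Icc (0:ℝ) 1, ∀ u ∈ Icc (0:ℝ) 1, 0 < K t u)
    (M m : ℝ)
    (hM : IsGreatest ((fun p : ℝ × ℝ => K p.1 p.2) '' (Icc 0 1 ×ˢ Icc 0 1)) M)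
    (hm : IsLeast ((fun p : ℝ × ℝ => K p.1 p.2) '' (Icc 0 1 ×ˢ Icc 0 1)) m)
    (hcond : (M / m) ^ k - (m / M) ^ k < 1 / (k : ℝ)) :
    ¬ ∃ f g : ℝ → ℝ,
      ContinuousOn f (Icc 0 1) ∧ ContinuousOn g (Icc 0 1) ∧
      (∀ t ∈ Icc (0:ℝ) 1, 0 ≤ f t) ∧ (∀ t ∈ Icc (0:ℝ) 1, 0 ≤ g t) ∧
      (∃ t ∈ Icc (0:ℝ) 1, f t ≠ 0) ∧ (∃ t ∈ Icc (0:ℝ) 1, g t ≠ 0) ∧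
      (∃ t ∈ Icc (0:ℝ) 1, f t ≠ g t) ∧
      (∀ t ∈ Icc (0:ℝ) 1, (W K f t / W K f 0) ^ k = g t) ∧
      (∀ t ∈ Icc (0:ℝ) 1, (W K g t / W K g 0) ^ k = f t) := by
  rintro ⟨f, g, hfc, hgc, hf0, hg0, ⟨t₁, ht₁, hf₁⟩, ⟨t₂, ht₂, hg₂⟩, ⟨t₃, ht₃, hne⟩, hfg, hgf⟩
  obtain ⟨⟨p, hp, hpK⟩, hmlb⟩ := hm
  have hm0 : 0 < m := hpK ▸ hKpos p.1 hp.1 p.2 hp.2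
  have hKm : ∀ t ∈ Icc (0:ℝ) 1, ∀ u ∈ Icc (0:ℝ) 1, m ≤ K t u :=
    fun t ht u hu => hmlb ⟨(t, u), ⟨ht, hu⟩, rfl⟩
  have hKM : ∀ t ∈ Icc (0:ℝ) 1, ∀ u ∈ Icc (0:ℝ) 1, K t u ≤ M :=
    fun t ht u hu => hM.2 ⟨(t, u), ⟨ht, hu⟩, rfl⟩
  have hmM : m ≤ M := hM.2 ⟨p, hp, hpK⟩
  have hM0 : 0 < M := lt_of_lt_of_le hm0 hmM
  have h0mem : (0:ℝ) ∈ Icc (0:ℝ) 1 := ⟨le_rfl, zero_le_one⟩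
  have Wdef : ∀ (h : ℝ → ℝ) (t : ℝ), W K h t = ∫ u in (0:ℝ)..1, K t u * h u := fun _ _ => rfl
  have contK : ∀ t ∈ Icc (0:ℝ) 1, ContinuousOn (fun u => K t u) (Icc 0 1) := by
    intro t ht
    have h1 : ContinuousOn (fun u : ℝ => ((t, u) : ℝ × ℝ)) (Icc 0 1) :=
      (Continuous.prodMk_right t).continuousOn
    exact hKcont.comp h1 (fun u hu => ⟨ht, hu⟩)
  have intK : ∀ (h : ℝ → ℝ), ContinuousOn h (Icc 0 1) → ∀ t ∈ Icc (0:ℝ) 1,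
      IntervalIntegrable (fun u => K t u * h u) volume 0 1 := by
    intro h hh t ht
    apply ContinuousOn.intervalIntegrable
    rw [Set.uIcc_of_le zero_le_one]
    exact (contK t ht).mul hh
  have intf : IntervalIntegrable f volume 0 1 := by
    apply ContinuousOn.intervalIntegrable; rwa [Set.uIcc_of_le zero_le_one]
  have intg : IntervalIntegrable g volume 0 1 := by
    apply ContinuousOn.intervalIntegrable; rwa [Set.uIcc_of_le zero_le_one]
  have hIf : 0 < ∫ u in (0:ℝ)..1, f u := integral_pos_of_ne f hfc hf0 t₁ ht₁ hf₁
  have hIg : 0 < ∫ u in (0:ℝ)..1, g u := integral_pos_of_ne g hgc hg0 t₂ ht₂ hg₂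
  -- bounds on W
  have Wb : ∀ (h : ℝ → ℝ), ContinuousOn h (Icc 0 1) → (∀ t ∈ Icc (0:ℝ) 1, 0 ≤ h t) →
      ∀ t ∈ Icc (0:ℝ) 1,
      m * (∫ u in (0:ℝ)..1, h u) ≤ W K h t ∧ W K h t ≤ M * (∫ u in (0:ℝ)..1, h u) := by
    intro h hh hh0 t ht
    have hint : IntervalIntegrable h volume 0 1 := by
      apply ContinuousOn.intervalIntegrable; rwa [Set.uIcc_of_le zero_le_one]
    rw [Wdef]
    constructor
    · rw [← intervalIntegral.integral_const_mul]
      exact intervalIntegral.integral_mono_on zero_le_one (hint.const_mul m) (intK h hh t ht)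
        (fun u hu => mul_le_mul_of_nonneg_right (hKm t ht u hu) (hh0 u hu))
    · rw [← intervalIntegral.integral_const_mul]
      exact intervalIntegral.integral_mono_on zero_le_one (intK h hh t ht) (hint.const_mul M)
        (fun u hu => mul_le_mul_of_nonneg_right (hKM t ht u hu) (hh0 u hu))
  have hWf0 : 0 < W K f 0 := lt_of_lt_of_le (mul_pos hm0 hIf) (Wb f hfc hf0 0 h0mem).1
  have hWg0 : 0 < W K g 0 := lt_of_lt_of_le (mul_pos hm0 hIg) (Wb g hgc hg0 0 h0mem).1
  have hβ : (1:ℝ) ≤ M / m := (one_le_div hm0).mpr hmM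
  -- ratio bounds
  have ratio : ∀ (h : ℝ → ℝ), ContinuousOn h (Icc 0 1) → (∀ t ∈ Icc (0:ℝ) 1, 0 ≤ h t) →
      0 < (∫ u in (0:ℝ)..1, h u) → ∀ t ∈ Icc (0:ℝ) 1,
      m / M ≤ W K h t / W K h 0 ∧ W K h t / W K h 0 ≤ M / m := by
    intro h hh hh0 hI t ht
    obtain ⟨l0, u0⟩ := Wb h hh hh0 0 h0mem
    obtain ⟨lt', ut'⟩ := Wb h hh hh0 t ht
    have hW0 : 0 < W K h 0 := lt_of_lt_of_le (mul_pos hm0 hI) l0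
    constructor
    · rw [div_le_div_iff₀ hM0 hW0]
      nlinarith [mul_le_mul_of_nonneg_left u0 hm0.le, mul_le_mul_of_nonneg_left lt' hM0.le]
    · rw [div_le_div_iff₀ hW0 hm0]
      nlinarith [mul_le_mul_of_nonneg_left l0 hM0.le, mul_le_mul_of_nonneg_left ut' hm0.le]
  -- pointwise bounds on g
  have hgb : ∀ t ∈ Icc (0:ℝ) 1, (m / M) ^ k ≤ g t := by
    intro t ht
    rw [← hfg t ht]
    exact pow_le_pow_left₀ (div_nonneg hm0.le hM0.le) (ratio f hfc hf0 hIf t ht).1 k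
  have hIgb : (m / M) ^ k ≤ ∫ u in (0:ℝ)..1, g u := by
    have := intervalIntegral.integral_mono_on zero_le_one intervalIntegrable_const intg hgb
    rwa [intervalIntegral.integral_const, smul_eq_mul, sub_zero, one_mul] at this
  -- max point
  have habs : ContinuousOn (fun t => |f t - g t|) (Icc 0 1) := (hfc.sub hgc).abs
  obtain ⟨ts, hts, hmaxOn⟩ :=
    isCompact_Icc.exists_isMaxOn (nonempty_Icc.mpr zero_le_one) habs
  set d := |f ts - g ts| with hd
  have hmax : ∀ t ∈ Icc (0:ℝ) 1, |f t - g t| ≤ d := fun t ht => hmaxOn ht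
  have hd0 : 0 ≤ d := abs_nonneg _
  have hintabs : IntervalIntegrable (fun u => |g u - f u|) volume 0 1 := by
    apply ContinuousOn.intervalIntegrable
    rw [Set.uIcc_of_le zero_le_one]; exact (hgc.sub hfc).abs
  have habsint : (∫ u in (0:ℝ)..1, |g u - f u|) ≤ d := by
    have := intervalIntegral.integral_mono_on zero_le_one hintabs intervalIntegrable_const
      (fun u hu => by rw [abs_sub_comm]; exact hmax u hu)
    rwa [intervalIntegral.integral_const, smul_eq_mul, sub_zero, one_mul] at this
  -- inner kernel estimate
  have inner : ∀ t ∈ Icc (0:ℝ) 1, ∀ u ∈ Icc (0:ℝ) 1,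
      |K t u * W K f 0 - W K f t * K 0 u| ≤ (M ^ 2 - m ^ 2) * ∫ v in (0:ℝ)..1, f v := by
    intro t ht u hu
    have e1 : K t u * W K f 0 = ∫ v in (0:ℝ)..1, K t u * (K 0 v * f v) := by
      rw [intervalIntegral.integral_const_mul, Wdef]
    have e2 : W K f t * K 0 u = ∫ v in (0:ℝ)..1, K 0 u * (K t v * f v) := by
      rw [intervalIntegral.integral_const_mul, mul_comm, Wdef]
    have cint : ContinuousOn (fun v => K t u * (K 0 v * f v) - K 0 u * (K t v * f v)) (Icc 0 1) :=
      (continuousOn_const.mul ((contK 0 h0mem).mul hfc)).sub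
        (continuousOn_const.mul ((contK t ht).mul hfc))
    have int1 : IntervalIntegrable
        (fun v => |K t u * (K 0 v * f v) - K 0 u * (K t v * f v)|) volume 0 1 := by
      apply ContinuousOn.intervalIntegrable
      rw [Set.uIcc_of_le zero_le_one]; exact cint.abs
    have int2 : IntervalIntegrable (fun v => (M ^ 2 - m ^ 2) * f v) volume 0 1 :=
      intf.const_mul _
    rw [e1, e2, ← intervalIntegral.integral_sub
      ((intK f hfc 0 h0mem).const_mul (K t u)) ((intK f hfc t ht).const_mul (K 0 u))]
    calc |∫ v in (0:ℝ)..1, (K t u * (K 0 v * f v) - K 0 u * (K t v * f v))|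
        ≤ ∫ v in (0:ℝ)..1, |K t u * (K 0 v * f v) - K 0 u * (K t v * f v)| :=
          intervalIntegral.abs_integral_le_integral_abs zero_le_one
      _ ≤ ∫ v in (0:ℝ)..1, (M ^ 2 - m ^ 2) * f v := by
          apply intervalIntegral.integral_mono_on zero_le_one int1 int2
          intro v hv
          have hrw : K t u * (K 0 v * f v) - K 0 u * (K t v * f v) =
              (K t u * K 0 v - K 0 u * K t v) * f v := by ring
          rw [hrw, abs_mul, abs_of_nonneg (hf0 v hv)]
          apply mul_le_mul_of_nonneg_right _ (hf0 v hv)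
          rw [abs_le]
          constructor
          · nlinarith [hKm t ht u hu, hKM t ht u hu, hKm 0 h0mem v hv, hKM 0 h0mem v hv,
              hKm t ht v hv, hKM t ht v hv, hKm 0 h0mem u hu, hKM 0 h0mem u hu, hm0]
          · nlinarith [hKm t ht u hu, hKM t ht u hu, hKm 0 h0mem v hv, hKM 0 h0mem v hv,
              hKm t ht v hv, hKM t ht v hv, hKm 0 h0mem u hu, hKM 0 h0mem u hu, hm0]
      _ = (M ^ 2 - m ^ 2) * ∫ v in (0:ℝ)..1, f v := intervalIntegral.integral_const_mul _ _
  -- numerator identity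
  have eN : ∀ t ∈ Icc (0:ℝ) 1,
      (∫ u in (0:ℝ)..1, (g u - f u) * (K t u * W K f 0 - W K f t * K 0 u)) =
      W K g t * W K f 0 - W K f t * W K g 0 := by
    intro t ht
    have I₁ := (intK g hgc t ht).const_mul (W K f 0)
    have I₂ := (intK f hfc t ht).const_mul (W K f 0)
    have I₃ := (intK g hgc 0 h0mem).const_mul (W K f t)
    have I₄ := (intK f hfc 0 h0mem).const_mul (W K f t)
    have expand : ∀ u : ℝ, (g u - f u) * (K t u * W K f 0 - W K f t * K 0 u) =
        W K f 0 * (K t u * g u) - W K f 0 * (K t u * f u) -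
          (W K f t * (K 0 u * g u) - W K f t * (K 0 u * f u)) := fun u => by ring
    simp only [expand]
    rw [intervalIntegral.integral_sub (I₁.sub I₂) (I₃.sub I₄),
      intervalIntegral.integral_sub I₁ I₂, intervalIntegral.integral_sub I₃ I₄,
      intervalIntegral.integral_const_mul, intervalIntegral.integral_const_mul,
      intervalIntegral.integral_const_mul, intervalIntegral.integral_const_mul,
      ← Wdef g t, ← Wdef f t, ← Wdef g 0, ← Wdef f 0]
    ring
  -- numerator bound
  have hnum : ∀ t ∈ Icc (0:ℝ) 1, |W K g t * W K f 0 - W K f t * W K g 0| ≤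
      (M ^ 2 - m ^ 2) * (∫ v in (0:ℝ)..1, f v) * d := by
    intro t ht
    have hcM : (0:ℝ) ≤ (M ^ 2 - m ^ 2) * ∫ v in (0:ℝ)..1, f v :=
      mul_nonneg (by nlinarith [mul_nonneg (sub_nonneg.mpr hmM) (show (0:ℝ) ≤ M + m by linarith)]) hIf.le
    have cint2 : ContinuousOn (fun u => K t u * W K f 0 - W K f t * K 0 u) (Icc 0 1) :=
      ((contK t ht).mul continuousOn_const).sub (continuousOn_const.mul (contK 0 h0mem))
    have int3 : IntervalIntegrable
        (fun u => |(g u - f u) * (K t u * W K f 0 - W K f t * K 0 u)|) volume 0 1 := by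
      apply ContinuousOn.intervalIntegrable
      rw [Set.uIcc_of_le zero_le_one]; exact ((hgc.sub hfc).mul cint2).abs
    have int4 : IntervalIntegrable
        (fun u => |g u - f u| * ((M ^ 2 - m ^ 2) * ∫ v in (0:ℝ)..1, f v)) volume 0 1 :=
      hintabs.mul_const _
    rw [← eN t ht]
    calc |∫ u in (0:ℝ)..1, (g u - f u) * (K t u * W K f 0 - W K f t * K 0 u)|
        ≤ ∫ u in (0:ℝ)..1, |(g u - f u) * (K t u * W K f 0 - W K f t * K 0 u)| :=
          intervalIntegral.abs_integral_le_integral_abs zero_le_one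
      _ ≤ ∫ u in (0:ℝ)..1, |g u - f u| * ((M ^ 2 - m ^ 2) * ∫ v in (0:ℝ)..1, f v) := by
          apply intervalIntegral.integral_mono_on zero_le_one int3 int4
          intro u hu
          rw [abs_mul]
          exact mul_le_mul_of_nonneg_left (inner t ht u hu) (abs_nonneg _)
      _ = (∫ u in (0:ℝ)..1, |g u - f u|) * ((M ^ 2 - m ^ 2) * ∫ v in (0:ℝ)..1, f v) :=
          intervalIntegral.integral_mul_const _ _
      _ ≤ d * ((M ^ 2 - m ^ 2) * ∫ v in (0:ℝ)..1, f v) :=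
          mul_le_mul_of_nonneg_right habsint hcM
      _ = (M ^ 2 - m ^ 2) * (∫ v in (0:ℝ)..1, f v) * d := by ring
  -- the geometric-sum split
  have hβ0 : (0:ℝ) ≤ M / m := le_trans zero_le_one hβ
  have hsplit : ∀ t ∈ Icc (0:ℝ) 1, |f t - g t| ≤
      ((k:ℝ) * (M / m) ^ (k - 1)) * |W K g t / W K g 0 - W K f t / W K f 0| := by
    intro t ht
    set ψ := W K g t / W K g 0 with hψdef
    set φ := W K f t / W K f 0 with hφdef
    obtain ⟨hψ1, hψ2⟩ := ratio g hgc hg0 hIg t ht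
    obtain ⟨hφ1, hφ2⟩ := ratio f hfc hf0 hIf t ht
    have hψ0 : 0 ≤ ψ := le_trans (div_nonneg hm0.le hM0.le) hψ1
    have hφ0 : 0 ≤ φ := le_trans (div_nonneg hm0.le hM0.le) hφ1
    have heq : f t - g t = ψ ^ k - φ ^ k := by rw [← hgf t ht, ← hfg t ht]
    rw [heq, ← geom_sum₂_mul ψ φ k, abs_mul]
    apply mul_le_mul_of_nonneg_right _ (abs_nonneg _)
    calc |∑ i ∈ Finset.range k, ψ ^ i * φ ^ (k - 1 - i)|
        ≤ ∑ i ∈ Finset.range k, |ψ ^ i * φ ^ (k - 1 - i)| := Finset.abs_sum_le_sum_abs _ _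
      _ ≤ ∑ i ∈ Finset.range k, (M / m) ^ (k - 1) := by
          apply Finset.sum_le_sum
          intro i hi
          rw [abs_of_nonneg (mul_nonneg (pow_nonneg hψ0 _) (pow_nonneg hφ0 _))]
          calc ψ ^ i * φ ^ (k - 1 - i) ≤ (M / m) ^ i * (M / m) ^ (k - 1 - i) :=
                mul_le_mul (pow_le_pow_left₀ hψ0 hψ2 i) (pow_le_pow_left₀ hφ0 hφ2 _)
                  (pow_nonneg hφ0 _) (pow_nonneg hβ0 _)
            _ = (M / m) ^ (k - 1) := by
                rw [← pow_add]
                congr 1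
                rw [Finset.mem_range] at hi
                omega
      _ = (k:ℝ) * (M / m) ^ (k - 1) := by
          rw [Finset.sum_const, Finset.card_range, nsmul_eq_mul]
  -- contraction constant
  have hC : (k:ℝ) * (M / m) ^ (k - 1) * ((M / m) ^ 2 - 1) * (M / m) ^ k < 1 := by
    apply numeric k hk (M / m) hβ
    have hinv : (m / M) ^ k = ((M / m) ^ k)⁻¹ := by
      rw [← inv_pow, inv_div]
    rw [← hinv]
    exact hcond
  -- key : 1 ≤ (M/m)^k * ∫ g
  have hkey : (1:ℝ) ≤ (M / m) ^ k * ∫ u in (0:ℝ)..1, g u := by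
    have h1 : (M / m) ^ k * (m / M) ^ k = 1 := by
      rw [← mul_pow, div_mul_div_comm]
      rw [mul_comm M m]
      rw [div_self (by positivity)]
      exact one_pow k
    nlinarith [pow_pos (div_pos hM0 hm0) k]
  -- difference of ratios bound
  have hdiff : |W K g ts / W K g 0 - W K f ts / W K f 0| ≤
      ((M / m) ^ 2 - 1) * ((M / m) ^ k * d) := by
    have hsub : W K g ts / W K g 0 - W K f ts / W K f 0 =
        (W K g ts * W K f 0 - W K g 0 * W K f ts) / (W K g 0 * W K f 0) :=
      div_sub_div _ _ (ne_of_gt hWg0) (ne_of_gt hWf0)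
    rw [hsub, abs_div, abs_of_pos (mul_pos hWg0 hWf0), mul_comm (W K g 0) (W K f ts)]
    have hA : (0:ℝ) ≤ (M ^ 2 - m ^ 2) * (∫ v in (0:ℝ)..1, f v) * d :=
      mul_nonneg (mul_nonneg (by nlinarith [mul_nonneg (sub_nonneg.mpr hmM) (show (0:ℝ) ≤ M + m by linarith)]) hIf.le) hd0
    have hden0 : (0:ℝ) < m * (∫ u in (0:ℝ)..1, g u) * (m * ∫ u in (0:ℝ)..1, f u) := by positivity
    have hdenle : m * (∫ u in (0:ℝ)..1, g u) * (m * ∫ u in (0:ℝ)..1, f u) ≤ W K g 0 * W K f 0 :=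
      mul_le_mul (Wb g hgc hg0 0 h0mem).1 (Wb f hfc hf0 0 h0mem).1
        (mul_pos hm0 hIf).le hWg0.le
    calc |W K g ts * W K f 0 - W K f ts * W K g 0| / (W K g 0 * W K f 0)
        ≤ ((M ^ 2 - m ^ 2) * (∫ v in (0:ℝ)..1, f v) * d) /
            (m * (∫ u in (0:ℝ)..1, g u) * (m * ∫ u in (0:ℝ)..1, f u)) :=
          div_le_div₀ hA (hnum ts hts) hden0 hdenle
      _ ≤ ((M / m) ^ 2 - 1) * ((M / m) ^ k * d) := by
          rw [div_le_iff₀ hden0]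
          have e : ((M / m) ^ 2 - 1) * ((M / m) ^ k * d) *
              (m * (∫ u in (0:ℝ)..1, g u) * (m * ∫ u in (0:ℝ)..1, f u)) =
              ((M ^ 2 - m ^ 2) * (∫ v in (0:ℝ)..1, f v) * d) *
                ((M / m) ^ k * ∫ u in (0:ℝ)..1, g u) := by
            field_simp
          rw [e]
          nlinarith [hkey, hA]
  -- final contradiction
  have final : d ≤ ((k:ℝ) * (M / m) ^ (k - 1)) * (((M / m) ^ 2 - 1) * ((M / m) ^ k * d)) :=
    (hsplit ts hts).trans (mul_le_mul_of_nonneg_left hdiff (by positivity))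
  have e2 : ((k:ℝ) * (M / m) ^ (k - 1)) * (((M / m) ^ 2 - 1) * ((M / m) ^ k * d)) =
      ((k:ℝ) * (M / m) ^ (k - 1) * ((M / m) ^ 2 - 1) * (M / m) ^ k) * d := by ring
  rw [e2] at final
  have hdle : d ≤ 0 := by
    by_contra hcon
    push_neg at hcon
    have := mul_lt_mul_of_pos_right hC hcon
    rw [one_mul] at this
    linarith
  have hfeq : f t₃ = g t₃ := by
    have h1 := hmax t₃ ht₃
    have h2 : |f t₃ - g t₃| = 0 := le_antisymm (h1.trans hdle) (abs_nonneg _)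
    exact sub_eq_zero.mp (abs_eq_zero.mp h2)
  exact hne hfeq
end

section
/- For all t, u ∈ [0,1], the limit as n → ∞ (along odd n) of K_n(t,u) is strictly positive; in particular lim_{n→∞} b_n = 1/4 and lim_{n→∞} c_n ≥ 1/2. -/
open Set MeasureTheory Filter

/-- For odd `n`, the real `n`-th root of `x` (the unique `y` with `y^n = x`). -/
noncomputable def oddRoot (n : ℕ) (x : ℝ) : ℝ :=
  if 0 ≤ x then x ^ ((n:ℝ)⁻¹) else -((-x) ^ ((n:ℝ)⁻¹))

/-- `b_n = (1/ⁿ√4)^(n-1) · (1 + 2/n)`. -/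
noncomputable def bseq (n : ℕ) : ℝ :=
  (1 / oddRoot n 4) ^ (n - 1) * (1 + 2 / (n : ℝ))

/-- `c_n > 0` is defined by `c_n³ = (1/2)·∫_{-1/2}^{1/2} du/(2 + ⁿ√u)²`. -/
noncomputable def cseq (n : ℕ) : ℝ :=
  ((1 / 2) * ∫ u in (-(1/2) : ℝ)..(1/2), 1 / (2 + oddRoot n u) ^ 2) ^ ((3:ℝ)⁻¹)

/-- The kernel `K_n(t,u)`. -/
noncomputable def Kn (n : ℕ) (t u : ℝ) : ℝ :=
  (1 - bseq n * (cseq n) ^ 3 * oddRoot n (u - 1/2) *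
      (oddRoot n ((u - 1/2) ^ 2) - 4) ^ 2 * oddRoot n (t - 1/2)) /
    ((cseq n) ^ 2 * (oddRoot n (u - 1/2) + 2) ^ 2)

/-! As `n → ∞`, the real `n`-th root `ⁿ√x` tends to `sign x` for every real `x`, and
`|ⁿ√x| ≤ 1` on `[-1, 1]`. Writing `(1/ⁿ√4)^(n-1) = ⁿ√4 / 4` gives `b_n → 1/4`; dominated
convergence gives `c_n³ → (1/2) ∫_{-1/2}^{1/2} (2 + sign u)⁻² = 5/18`, and `(5/18)^(1/3) ≥ 1/2`.
So `K_n(t,u)` tends to a quotient with positive denominator and numerator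
`1 - (5/72) · s (s² - 4)² · s'` with `s, s' ∈ {-1, 0, 1}`, which is at least `3/8`. -/

open Topology

lemma Real.abs_sign_le_one (x : ℝ) : |Real.sign x| ≤ 1 := by
  rcases Real.sign_apply_eq x with h | h | h <;> simp [h]

lemma Real.tendsto_rpow_inv_natCast {y : ℝ} (hy : 0 < y) :
    Tendsto (fun n : ℕ => y ^ (n : ℝ)⁻¹) atTop (𝓝 1) := by
  simpa [Function.comp_def] using
    ((Real.continuousAt_const_rpow (b := 0) hy.ne').tendsto).comp tendsto_inv_atTop_nhds_zero_nat

lemma oddRoot_eq_sign_mul_rpow {n : ℕ} (hn : n ≠ 0) (x : ℝ) :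
    oddRoot n x = Real.sign x * |x| ^ (n : ℝ)⁻¹ := by
  rcases lt_trichotomy x 0 with h | rfl | h
  · simp [oddRoot, h.not_ge, Real.sign_of_neg h, abs_of_neg h]
  · simp [oddRoot, Real.sign_zero, hn]
  · simp [oddRoot, h.le, Real.sign_of_pos h, abs_of_pos h]

lemma measurable_oddRoot (n : ℕ) : Measurable (oddRoot n) :=
  Measurable.ite measurableSet_Ici (by fun_prop) (by fun_prop)

lemma abs_oddRoot_le_one {n : ℕ} (hn : n ≠ 0) {x : ℝ} (hx : |x| ≤ 1) : |oddRoot n x| ≤ 1 := by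
  have hroot_nonneg : 0 ≤ |x| ^ (n : ℝ)⁻¹ := Real.rpow_nonneg (abs_nonneg x) _
  rw [oddRoot_eq_sign_mul_rpow hn, abs_mul, abs_of_nonneg hroot_nonneg]
  exact mul_le_one₀ (Real.abs_sign_le_one x) hroot_nonneg
    (Real.rpow_le_one (abs_nonneg x) hx (by positivity))

lemma tendsto_oddRoot (x : ℝ) : Tendsto (fun n => oddRoot n x) atTop (𝓝 (Real.sign x)) := by
  have hlim : Tendsto (fun n : ℕ => Real.sign x * |x| ^ (n : ℝ)⁻¹) atTop (𝓝 (Real.sign x)) := by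
    rcases eq_or_ne x 0 with rfl | hx
    · simp [Real.sign_zero]
    · simpa using tendsto_const_nhds.mul (Real.tendsto_rpow_inv_natCast (abs_pos.mpr hx))
  refine hlim.congr' ?_
  filter_upwards [eventually_ne_atTop 0] with n hn
  exact (oddRoot_eq_sign_mul_rpow hn x).symm

lemma bseq_eq {n : ℕ} (hn : n ≠ 0) : bseq n = (4 : ℝ) ^ (n : ℝ)⁻¹ / 4 * (1 + 2 / n) := by
  obtain ⟨k, rfl⟩ := Nat.exists_eq_add_one_of_ne_zero hn
  have hpow := Real.rpow_inv_natCast_pow (by norm_num : (0:ℝ) ≤ 4) hn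
  set r : ℝ := 4 ^ ((k + 1 : ℕ) : ℝ)⁻¹
  have hr : 0 < r := by positivity
  rw [bseq, oddRoot, if_pos (by norm_num), Nat.add_sub_cancel]
  change (1 / r) ^ k * _ = r / 4 * _
  rw [← hpow, pow_succ, one_div_pow]
  field_simp

lemma tendsto_bseq : Tendsto bseq atTop (𝓝 (1 / 4)) := by
  have hlim : Tendsto (fun n : ℕ => (4 : ℝ) ^ (n : ℝ)⁻¹ / 4 * (1 + 2 / n)) atTop
      (𝓝 (1 / 4 * (1 + 0))) :=
    ((Real.tendsto_rpow_inv_natCast (by norm_num)).div_const 4).mul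
      (tendsto_const_nhds.add (tendsto_const_div_atTop_nhds_zero_nat 2))
  rw [add_zero, mul_one] at hlim
  refine hlim.congr' ?_
  filter_upwards [eventually_ne_atTop 0] with n hn
  exact (bseq_eq hn).symm

lemma tendsto_intervalIntegral_inv_sq_two_add_oddRoot {a b : ℝ} (hab : uIcc a b ⊆ Icc (-1) 1) :
    Tendsto (fun n => ∫ u in a..b, 1 / (2 + oddRoot n u) ^ 2) atTop
      (𝓝 (∫ u in a..b, 1 / (2 + Real.sign u) ^ 2)) := by
  refine intervalIntegral.tendsto_integral_filter_of_dominated_convergence (fun _ => 1)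
    (Eventually.of_forall fun n =>
      (((measurable_oddRoot n).const_add 2).pow_const 2).const_div 1 |>.aestronglyMeasurable)
    ?_ intervalIntegrable_const (Eventually.of_forall fun x _ => ?_)
  · filter_upwards [eventually_ne_atTop 0] with n hn
    refine Eventually.of_forall fun x hx => ?_
    have hx' : |x| ≤ 1 := abs_le.mpr (hab (uIoc_subset_uIcc hx))
    have hroot := neg_le_of_abs_le (abs_oddRoot_le_one hn hx')
    rw [Real.norm_eq_abs, abs_of_nonneg (by positivity), div_le_one (by nlinarith)]
    nlinarith
  · have hsign : 2 + Real.sign x ≠ 0 := by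
      linarith [neg_le_of_abs_le (Real.abs_sign_le_one x)]
    exact tendsto_const_nhds.div ((tendsto_const_nhds.add (tendsto_oddRoot x)).pow 2)
      (pow_ne_zero 2 hsign)

lemma integral_inv_sq_two_add_sign :
    ∫ u in (-(1/2) : ℝ)..(1/2), 1 / (2 + Real.sign u) ^ 2 = 5 / 9 := by
  have hneg : EqOn (fun u : ℝ => 1 / (2 + Real.sign u) ^ 2) (fun _ => 1) (Ioo (-(1/2)) 0) :=
    fun u hu => by norm_num [Real.sign_of_neg hu.2]
  have hpos : EqOn (fun u : ℝ => 1 / (2 + Real.sign u) ^ 2) (fun _ => 1 / 9) (Ioo 0 (1/2)) :=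
    fun u hu => by norm_num [Real.sign_of_pos hu.1]
  rw [← intervalIntegral.integral_add_adjacent_intervals (b := 0)
    (intervalIntegrable_const.congr_uIoo (uIoo_of_le (by norm_num : (-(1/2) : ℝ) ≤ 0) ▸ hneg.symm))
    (intervalIntegrable_const.congr_uIoo (uIoo_of_le (by norm_num : (0 : ℝ) ≤ 1/2) ▸ hpos.symm)),
    intervalIntegral.integral_congr_Ioo_of_le (by norm_num) hneg,
    intervalIntegral.integral_congr_Ioo_of_le (by norm_num) hpos]
  norm_num

lemma tendsto_cseq : Tendsto cseq atTop (𝓝 ((5 / 18 : ℝ) ^ (3 : ℝ)⁻¹)) := by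
  have hsub : uIcc (-(1/2) : ℝ) (1/2) ⊆ Icc (-1) 1 := by
    rw [uIcc_of_le (by norm_num)]
    exact Icc_subset_Icc (by norm_num) (by norm_num)
  have hint := (tendsto_intervalIntegral_inv_sq_two_add_oddRoot hsub).const_mul (1 / 2)
  rw [integral_inv_sq_two_add_sign, show (1 / 2 : ℝ) * (5 / 9) = 5 / 18 by norm_num] at hint
  exact (Real.continuousAt_rpow_const _ _ (Or.inr (by norm_num))).tendsto.comp hint

lemma cube_cbrt_five_div_eighteen : ((5 / 18 : ℝ) ^ (3 : ℝ)⁻¹) ^ 3 = 5 / 18 := by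
  simpa using Real.rpow_inv_natCast_pow (n := 3) (by norm_num : (0 : ℝ) ≤ 5 / 18) (by norm_num)

lemma half_le_cbrt_five_div_eighteen : (1 : ℝ) / 2 ≤ (5 / 18 : ℝ) ^ (3 : ℝ)⁻¹ :=
  le_of_pow_le_pow_left₀ three_ne_zero (by positivity)
    (by rw [cube_cbrt_five_div_eighteen]; norm_num)

-- `sign x * (sign (x ^ 2) - 4) ^ 2` is `0` or `±9`.
lemma one_sub_mul_sign_pos (x y : ℝ) {k : ℝ} (hk : |k| < 1 / 9) :
    0 < 1 - k * Real.sign x * (Real.sign (x ^ 2) - 4) ^ 2 * Real.sign y := by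
  have hky : |k * Real.sign y| < 1 / 9 := by
    rw [abs_mul]
    exact (mul_le_of_le_one_right (abs_nonneg k) (Real.abs_sign_le_one y)).trans_lt hk
  rcases lt_trichotomy x 0 with h | rfl | h
  · rw [Real.sign_of_neg h, Real.sign_of_pos (by nlinarith)]
    linarith [neg_abs_le (k * Real.sign y)]
  · simp [Real.sign_zero]
  · rw [Real.sign_of_pos h, Real.sign_of_pos (by positivity)]
    linarith [le_abs_self (k * Real.sign y)]

lemma exists_pos_tendsto_Kn (t u : ℝ) :
    ∃ L, 0 < L ∧ Tendsto (fun n => Kn n t u) atTop (𝓝 L) := by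
  set c : ℝ := (5 / 18 : ℝ) ^ (3 : ℝ)⁻¹
  have hnum := one_sub_mul_sign_pos (u - 1/2) (t - 1/2) (k := 1 / 4 * c ^ 3)
    (by rw [cube_cbrt_five_div_eighteen]; norm_num [abs_of_pos])
  have hden : 0 < c ^ 2 * (Real.sign (u - 1/2) + 2) ^ 2 := by
    have hsign := neg_le_of_abs_le (Real.abs_sign_le_one (u - 1/2))
    have hshift : 0 < Real.sign (u - 1/2) + 2 := by linarith
    positivity
  refine ⟨_, div_pos hnum hden, ?_⟩
  have hroot := tendsto_oddRoot
  exact (tendsto_const_nhds.sub ((((tendsto_bseq.mul (tendsto_cseq.pow 3)).mul (hroot _)).mul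
    (((hroot _).sub tendsto_const_nhds).pow 2)).mul (hroot _))).div
    ((tendsto_cseq.pow 2).mul (((hroot _).add tendsto_const_nhds).pow 2)) hden.ne'

theorem stmt_11 :
    (∀ t ∈ Icc (0:ℝ) 1, ∀ u ∈ Icc (0:ℝ) 1,
      ∃ L : ℝ, 0 < L ∧ Tendsto (fun m : ℕ => Kn (2 * m + 1) t u) atTop (nhds L)) ∧
    Tendsto (fun m : ℕ => bseq (2 * m + 1)) atTop (nhds (1 / 4)) ∧
    (∃ cL : ℝ, Tendsto (fun m : ℕ => cseq (2 * m + 1)) atTop (nhds cL) ∧ (1:ℝ)/2 ≤ cL) := by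
  have hodd : Tendsto (fun m : ℕ => 2 * m + 1) atTop atTop :=
    tendsto_atTop_mono (fun m => show m ≤ 2 * m + 1 by omega) tendsto_id
  refine ⟨fun t _ u _ => ?_, tendsto_bseq.comp hodd,
    _, tendsto_cseq.comp hodd, half_le_cbrt_five_div_eighteen⟩
  obtain ⟨L, hL, hK⟩ := exists_pos_tendsto_Kn t u
  exact ⟨L, hL, hK.comp hodd⟩
end

section
/- Let n be odd and such that K_n(t,u) > 0 for all t, u ∈ [0,1]. Then the system of Hammerstein equations ∫₀¹ K_n(t,u)·f(u)² du = g(t), ∫₀¹ K_n(t,u)·g(u)² du = f(t) (for all t ∈ [0,1]) has at least two positive continuous solutions (f,g) with f ≠ g; specifically, with f₁(t) = c_n·(r_n(t − 1/2) + 2) and g₁(t) = 1, both (f₁, g₁) and (g₁, f₁) are solutions. -/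
open Set MeasureTheory Filter

/-!
Put `r = oddRoot n` and substitute `v = u - 1/2`, which moves every integral to `[-1/2, 1/2]`,
where `r` is odd. Multiplied by `f₁(u)² = c_n² (r v + 2)²`, the kernel becomes `1` minus a
multiple of the odd function `r (r² - 4)²`, so it integrates to `1 = g₁ t`. The kernel itself is
`c_n⁻² (2 + r v)⁻² - b_n c_n r(t - 1/2) · r (r - 2)²`: the first term integrates to `2 c_n`
by the definition of `c_n`, and since `r³ + 4 r` is odd,
`∫ r (r - 2)² = -4 ∫ r² = -4 (1/2)^(2/n) / (1 + 2/n) = -1 / b_n`.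
Hence the second integral is `c_n (r(t - 1/2) + 2) = f₁ t`.
-/

-- No integrability is needed: `x ↦ -x` shows the integral equals its own negative.
lemma integral_eq_zero_of_odd {f : ℝ → ℝ} (hf : ∀ x, f (-x) = -f x) (a : ℝ) :
    ∫ x in -a..a, f x = 0 := by
  have h := intervalIntegral.integral_comp_neg (a := -a) (b := a) f
  simp only [hf, intervalIntegral.integral_neg, neg_neg] at h
  linarith

lemma integral_eq_two_mul_of_even {f : ℝ → ℝ} (hc : Continuous f) (hf : ∀ x, f (-x) = f x)
    (a : ℝ) : ∫ x in -a..a, f x = 2 * ∫ x in (0:ℝ)..a, f x := by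
  have h := intervalIntegral.integral_comp_neg (a := 0) (b := a) f
  simp only [hf, neg_zero] at h
  rw [← intervalIntegral.integral_add_adjacent_intervals (hc.intervalIntegrable (-a) 0)
    (hc.intervalIntegrable 0 a), ← h]
  ring

lemma integral_unitInterval_comp_sub_half (f : ℝ → ℝ) :
    ∫ u in (0:ℝ)..1, f (u - 1/2) = ∫ v in -(1/2:ℝ)..(1/2), f v := by
  rw [intervalIntegral.integral_comp_sub_right]
  norm_num

lemma uIcc_neg_half_half_subset_Ici : uIcc (-(1/2) : ℝ) (1/2) ⊆ Ici (-1) := by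
  rw [uIcc_of_le (by norm_num)]
  exact Icc_subset_Ici_iff (by norm_num) |>.2 (by norm_num)

section

variable {n : ℕ}

lemma oddRoot_of_nonneg {x : ℝ} (hx : 0 ≤ x) : oddRoot n x = x ^ ((n:ℝ)⁻¹) := if_pos hx

lemma oddRoot_pos {x : ℝ} (hx : 0 < x) : 0 < oddRoot n x := by
  rw [oddRoot_of_nonneg hx.le]
  exact Real.rpow_pos_of_pos hx _

lemma oddRoot_neg (hn : n ≠ 0) (x : ℝ) : oddRoot n (-x) = -oddRoot n x := by
  rcases lt_trichotomy x 0 with h | rfl | h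
  · rw [oddRoot, if_pos (by linarith), oddRoot, if_neg (not_le.2 h), neg_neg]
  · simp [oddRoot, Real.zero_rpow (inv_ne_zero (Nat.cast_ne_zero.2 hn))]
  · rw [oddRoot, if_neg (by linarith), oddRoot, if_pos h.le, neg_neg]

lemma oddRoot_pow (hn : Odd n) (x : ℝ) : oddRoot n x ^ n = x := by
  rcases le_or_gt 0 x with h | h
  · rw [oddRoot_of_nonneg h, Real.rpow_inv_natCast_pow h hn.pos.ne']
  · rw [oddRoot, if_neg (not_le.2 h), hn.neg_pow,
      Real.rpow_inv_natCast_pow (by linarith) hn.pos.ne', neg_neg]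

lemma oddRoot_eq_of_pow_eq (hn : Odd n) {x y : ℝ} (h : y ^ n = x) : oddRoot n x = y :=
  hn.strictMono_pow.injective (by rw [oddRoot_pow hn, h])

lemma monotone_oddRoot (hn : Odd n) : Monotone (oddRoot n) := fun x y hxy => by
  rwa [← hn.strictMono_pow.le_iff_le, oddRoot_pow hn, oddRoot_pow hn]

lemma oddRoot_sq (hn : Odd n) (x : ℝ) : oddRoot n (x ^ 2) = oddRoot n x ^ 2 :=
  oddRoot_eq_of_pow_eq hn (by rw [← pow_mul, mul_comm, pow_mul, oddRoot_pow hn])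

lemma oddRoot_add_two_pos (hn : Odd n) {x : ℝ} (hx : -1 ≤ x) : 0 < oddRoot n x + 2 := by
  have h : oddRoot n (-1) ≤ oddRoot n x := monotone_oddRoot hn hx
  rw [oddRoot_eq_of_pow_eq hn hn.neg_one_pow] at h
  linarith

lemma continuous_oddRoot (hn : n ≠ 0) : Continuous (oddRoot n) := by
  have h := Real.continuous_rpow_const (q := (n:ℝ)⁻¹) (by positivity)
  refine Continuous.if_le h (h.comp continuous_neg).neg continuous_const continuous_id ?_
  rintro x rfl
  simp [Real.zero_rpow (inv_ne_zero (Nat.cast_ne_zero.2 hn))]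

lemma integral_oddRoot_sq (hn : Odd n) {a : ℝ} (ha : 0 ≤ a) :
    ∫ v in -a..a, oddRoot n v ^ 2 = 2 * a ^ (2 / (n:ℝ) + 1) / (2 / (n:ℝ) + 1) := by
  have hn0 := hn.pos.ne'
  rw [integral_eq_two_mul_of_even (f := fun v => oddRoot n v ^ 2) ((continuous_oddRoot hn0).pow 2)
    (fun x => by rw [oddRoot_neg hn0, neg_sq]) a]
  have hrpow : EqOn (fun v => oddRoot n v ^ 2) (fun v => v ^ (2 / (n:ℝ))) (uIcc 0 a) := by
    intro v hv
    rw [uIcc_of_le ha] at hv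
    simp only [oddRoot_of_nonneg hv.1, ← Real.rpow_mul_natCast hv.1]
    ring_nf
  have hexp : -1 < 2 / (n:ℝ) := by linarith [show (0:ℝ) ≤ 2 / n by positivity]
  rw [intervalIntegral.integral_congr hrpow, integral_rpow (Or.inl hexp),
    Real.zero_rpow (by positivity)]
  ring

lemma half_rpow_two_div_eq_inv_oddRoot_four (hn : Odd n) :
    (1/2 : ℝ) ^ (2 / (n:ℝ)) = (oddRoot n 4)⁻¹ := by
  have h : ((1/2 : ℝ) ^ (2 / (n:ℝ)))⁻¹ ^ n = 4 := by
    rw [inv_pow, ← Real.rpow_mul_natCast (by norm_num),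
      div_mul_cancel₀ _ (by exact_mod_cast hn.pos.ne')]
    norm_num
  rw [oddRoot_eq_of_pow_eq hn h, inv_inv]

lemma four_mul_bseq_mul_integral_oddRoot_sq (hn : Odd n) :
    4 * bseq n * ∫ v in -(1/2 : ℝ)..(1/2), oddRoot n v ^ 2 = 1 := by
  have hρ : (1 / oddRoot n 4) ^ (n - 1) * (oddRoot n 4)⁻¹ = 1 / 4 := by
    rw [← one_div, ← pow_succ, Nat.sub_add_cancel hn.pos, one_div_pow, oddRoot_pow hn]
  have hn' : (n:ℝ) ≠ 0 := by exact_mod_cast hn.pos.ne'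
  rw [integral_oddRoot_sq hn (by norm_num), Real.rpow_add (by norm_num), Real.rpow_one,
    half_rpow_two_div_eq_inv_oddRoot_four hn, bseq]
  field_simp
  linear_combination (4 * (n + 2)) * hρ

lemma cseq_pow_three (n : ℕ) :
    cseq n ^ 3 = (1/2) * ∫ v in -(1/2 : ℝ)..(1/2), 1 / (2 + oddRoot n v) ^ 2 := by
  have h : 0 ≤ (1/2) * ∫ v in -(1/2 : ℝ)..(1/2), 1 / (2 + oddRoot n v) ^ 2 :=
    mul_nonneg (by norm_num)
      (intervalIntegral.integral_nonneg (by norm_num) fun _ _ => by positivity)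
  simpa [cseq] using Real.rpow_inv_natCast_pow h (n := 3) (by norm_num)

lemma continuousOn_one_div_two_add_oddRoot_sq (hn : Odd n) :
    ContinuousOn (fun v => 1 / (2 + oddRoot n v) ^ 2) (Ici (-1)) :=
  continuousOn_const.div ((continuous_const.add (continuous_oddRoot hn.pos.ne')).pow 2).continuousOn
    fun v hv => pow_ne_zero 2 (by linarith [oddRoot_add_two_pos hn hv])

lemma cseq_pos (hn : Odd n) : 0 < cseq n := by
  have hint : 0 < ∫ v in -(1/2 : ℝ)..(1/2), 1 / (2 + oddRoot n v) ^ 2 := by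
    have hcont := (continuousOn_one_div_two_add_oddRoot_sq hn).mono uIcc_neg_half_half_subset_Ici
    refine intervalIntegral.intervalIntegral_pos_of_pos_on hcont.intervalIntegrable
      (fun v hv => ?_) (by norm_num)
    have hv' := oddRoot_add_two_pos hn (x := v) (by linarith [hv.1])
    exact one_div_pos.2 (pow_pos (by linarith) 2)
  exact Real.rpow_pos_of_pos (by linarith) _

lemma Kn_mul_sq_eq (hn : Odd n) (t : ℝ) {u : ℝ} (hu : -(1/2) ≤ u) :
    Kn n t u * (cseq n * (oddRoot n (u - 1/2) + 2)) ^ 2 =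
      1 - bseq n * cseq n ^ 3 * oddRoot n (t - 1/2) *
        (oddRoot n (u - 1/2) * (oddRoot n (u - 1/2) ^ 2 - 4) ^ 2) := by
  have hx := oddRoot_add_two_pos hn (x := u - 1/2) (by linarith)
  have hc := cseq_pos hn
  rw [Kn, oddRoot_sq hn, mul_pow, div_mul_cancel₀ _ (by positivity)]
  ring

lemma Kn_eq (hn : Odd n) (t : ℝ) {u : ℝ} (hu : -(1/2) ≤ u) :
    Kn n t u = (cseq n ^ 2)⁻¹ * (1 / (2 + oddRoot n (u - 1/2)) ^ 2) -
      bseq n * cseq n * oddRoot n (t - 1/2) *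
        (oddRoot n (u - 1/2) * (oddRoot n (u - 1/2) - 2) ^ 2) := by
  have hx := oddRoot_add_two_pos hn (x := u - 1/2) (by linarith)
  have hc := cseq_pos hn
  rw [Kn, oddRoot_sq hn]
  generalize oddRoot n (u - 1/2) = x at hx ⊢
  have hx' : 2 + x ≠ 0 := by linarith
  field_simp
  ring

lemma integral_oddRoot_mul_sub_two_sq (hn : Odd n) (a : ℝ) :
    ∫ v in -a..a, oddRoot n v * (oddRoot n v - 2) ^ 2 = -4 * ∫ v in -a..a, oddRoot n v ^ 2 := by
  have hr := continuous_oddRoot hn.pos.ne'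
  have hodd : ∫ v in -a..a, (oddRoot n v ^ 3 + 4 * oddRoot n v) = 0 :=
    integral_eq_zero_of_odd (fun v => by rw [oddRoot_neg hn.pos.ne']; ring) a
  calc ∫ v in -a..a, oddRoot n v * (oddRoot n v - 2) ^ 2
      = ∫ v in -a..a, ((oddRoot n v ^ 3 + 4 * oddRoot n v) - 4 * oddRoot n v ^ 2) := by
        congr 1; ext v; ring
    _ = -4 * ∫ v in -a..a, oddRoot n v ^ 2 := by
        rw [intervalIntegral.integral_sub ((by fun_prop : Continuous _).intervalIntegrable _ _)
          ((by fun_prop : Continuous _).intervalIntegrable _ _), hodd,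
          intervalIntegral.integral_const_mul]
        ring

lemma integral_Kn_mul_sq (hn : Odd n) (t : ℝ) :
    ∫ u in (0:ℝ)..1, Kn n t u * (cseq n * (oddRoot n (u - 1/2) + 2)) ^ 2 = 1 := by
  have hr := continuous_oddRoot hn.pos.ne'
  set B := bseq n * cseq n ^ 3 * oddRoot n (t - 1/2)
  have hodd : ∫ v in -(1/2 : ℝ)..(1/2), oddRoot n v * (oddRoot n v ^ 2 - 4) ^ 2 = 0 :=
    integral_eq_zero_of_odd (fun v => by rw [oddRoot_neg hn.pos.ne']; ring) _
  calc ∫ u in (0:ℝ)..1, Kn n t u * (cseq n * (oddRoot n (u - 1/2) + 2)) ^ 2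
      = ∫ u in (0:ℝ)..1, (1 - B * (oddRoot n (u - 1/2) * (oddRoot n (u - 1/2) ^ 2 - 4) ^ 2)) :=
        intervalIntegral.integral_congr fun u hu =>
          Kn_mul_sq_eq hn t (by rw [uIcc_of_le zero_le_one] at hu; linarith [hu.1])
    _ = ∫ v in -(1/2 : ℝ)..(1/2), (1 - B * (oddRoot n v * (oddRoot n v ^ 2 - 4) ^ 2)) :=
        integral_unitInterval_comp_sub_half fun v =>
          1 - B * (oddRoot n v * (oddRoot n v ^ 2 - 4) ^ 2)
    _ = 1 := by
        rw [intervalIntegral.integral_sub intervalIntegrable_const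
          ((by fun_prop : Continuous _).intervalIntegrable _ _),
          intervalIntegral.integral_const_mul, hodd]
        norm_num

lemma integral_Kn (hn : Odd n) (t : ℝ) :
    ∫ u in (0:ℝ)..1, Kn n t u = cseq n * (oddRoot n (t - 1/2) + 2) := by
  have hr := continuous_oddRoot hn.pos.ne'
  have hc := cseq_pos hn
  set B := bseq n * cseq n * oddRoot n (t - 1/2)
  have hden := (continuousOn_one_div_two_add_oddRoot_sq hn).mono uIcc_neg_half_half_subset_Ici
  calc ∫ u in (0:ℝ)..1, Kn n t u
      = ∫ u in (0:ℝ)..1, ((cseq n ^ 2)⁻¹ * (1 / (2 + oddRoot n (u - 1/2)) ^ 2) -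
          B * (oddRoot n (u - 1/2) * (oddRoot n (u - 1/2) - 2) ^ 2)) :=
        intervalIntegral.integral_congr fun u hu =>
          Kn_eq hn t (by rw [uIcc_of_le zero_le_one] at hu; linarith [hu.1])
    _ = ∫ v in -(1/2 : ℝ)..(1/2), ((cseq n ^ 2)⁻¹ * (1 / (2 + oddRoot n v) ^ 2) -
          B * (oddRoot n v * (oddRoot n v - 2) ^ 2)) :=
        integral_unitInterval_comp_sub_half fun v =>
          (cseq n ^ 2)⁻¹ * (1 / (2 + oddRoot n v) ^ 2) -
            B * (oddRoot n v * (oddRoot n v - 2) ^ 2)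
    _ = (cseq n ^ 2)⁻¹ * (2 * cseq n ^ 3) +
          B * (4 * ∫ v in -(1/2 : ℝ)..(1/2), oddRoot n v ^ 2) := by
        rw [intervalIntegral.integral_sub (hden.intervalIntegrable.const_mul _)
          ((by fun_prop : Continuous _).intervalIntegrable _ _),
          intervalIntegral.integral_const_mul, intervalIntegral.integral_const_mul,
          integral_oddRoot_mul_sub_two_sq hn, cseq_pow_three]
        ring
    _ = cseq n * (oddRoot n (t - 1/2) + 2) := by
        have hc2 : (cseq n ^ 2)⁻¹ * (2 * cseq n ^ 3) = 2 * cseq n := by field_simp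
        linear_combination
          hc2 + (cseq n * oddRoot n (t - 1/2)) * four_mul_bseq_mul_integral_oddRoot_sq hn

end

theorem stmt_13_general
    (n : ℕ) (hn : Odd n)
    (f₁ g₁ : ℝ → ℝ)
    (hf₁ : f₁ = fun t => cseq n * (oddRoot n (t - 1/2) + 2))
    (hg₁ : g₁ = fun _ => (1:ℝ)) :
    ContinuousOn f₁ (Icc 0 1) ∧ ContinuousOn g₁ (Icc 0 1) ∧
    (∀ t ∈ Icc (0:ℝ) 1, 0 < f₁ t) ∧ (∀ t ∈ Icc (0:ℝ) 1, 0 < g₁ t) ∧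
    (∃ t ∈ Icc (0:ℝ) 1, f₁ t ≠ g₁ t) ∧
    (∀ t ∈ Icc (0:ℝ) 1,
      (∫ u in (0:ℝ)..1, Kn n t u * f₁ u ^ 2) = g₁ t ∧
      (∫ u in (0:ℝ)..1, Kn n t u * g₁ u ^ 2) = f₁ t) ∧
    (∀ t ∈ Icc (0:ℝ) 1,
      (∫ u in (0:ℝ)..1, Kn n t u * g₁ u ^ 2) = f₁ t ∧
      (∫ u in (0:ℝ)..1, Kn n t u * f₁ u ^ 2) = g₁ t) := by
  subst hf₁ hg₁
  have hr := continuous_oddRoot hn.pos.ne'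
  have hc := cseq_pos hn
  have hsol : ∀ t ∈ Icc (0:ℝ) 1,
      (∫ u in (0:ℝ)..1, Kn n t u * (cseq n * (oddRoot n (u - 1/2) + 2)) ^ 2) = 1 ∧
      (∫ u in (0:ℝ)..1, Kn n t u * 1 ^ 2) = cseq n * (oddRoot n (t - 1/2) + 2) := fun t _ => by
    simp only [one_pow, mul_one]
    exact ⟨integral_Kn_mul_sq hn t, integral_Kn hn t⟩
  have hf₁_ne_g₁ : ∃ t ∈ Icc (0:ℝ) 1, cseq n * (oddRoot n (t - 1/2) + 2) ≠ 1 := by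
    by_contra! h
    have h0 := h 0 (by norm_num)
    have h1 := h 1 (by norm_num)
    rw [show (0:ℝ) - 1/2 = -(1/2) by norm_num, oddRoot_neg hn.pos.ne'] at h0
    norm_num at h1
    have : cseq n * oddRoot n (1/2) = 0 := by linarith
    exact (mul_pos hc (oddRoot_pos (by norm_num))).ne' this
  exact ⟨(by fun_prop : Continuous _).continuousOn, continuousOn_const,
    fun t ht => mul_pos hc (oddRoot_add_two_pos hn (by linarith [ht.1])), fun _ _ => one_pos,
    hf₁_ne_g₁, hsol, fun t ht => (hsol t ht).symm⟩

theorem stmt_13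
    (n : ℕ) (hn : Odd n)
    (hKpos : ∀ t ∈ Icc (0:ℝ) 1, ∀ u ∈ Icc (0:ℝ) 1, 0 < Kn n t u)
    (f₁ g₁ : ℝ → ℝ)
    (hf₁ : f₁ = fun t => cseq n * (oddRoot n (t - 1/2) + 2))
    (hg₁ : g₁ = fun _ => (1:ℝ)) :
    ContinuousOn f₁ (Icc 0 1) ∧ ContinuousOn g₁ (Icc 0 1) ∧
    (∀ t ∈ Icc (0:ℝ) 1, 0 < f₁ t) ∧ (∀ t ∈ Icc (0:ℝ) 1, 0 < g₁ t) ∧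
    (∃ t ∈ Icc (0:ℝ) 1, f₁ t ≠ g₁ t) ∧
    (∀ t ∈ Icc (0:ℝ) 1,
      (∫ u in (0:ℝ)..1, Kn n t u * f₁ u ^ 2) = g₁ t ∧
      (∫ u in (0:ℝ)..1, Kn n t u * g₁ u ^ 2) = f₁ t) ∧
    (∀ t ∈ Icc (0:ℝ) 1,
      (∫ u in (0:ℝ)..1, Kn n t u * g₁ u ^ 2) = f₁ t ∧
      (∫ u in (0:ℝ)..1, Kn n t u * f₁ u ^ 2) = g₁ t) :=
  stmt_13_general n hn f₁ g₁ hf₁ hg₁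
end
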